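/- arXiv:0901.0091 — 6 statements merged into one kernel-verified Lean document; each statement's English description precedes it below -/
import Mathlib

section
/- Let g: ℝ → ℝ be continuously differentiable with g(0) = 0 and g'(z) ≥ ε for all z, where ε > 0. Let λ > 0, h ≥ 0, and let H: ℝ → ℝ be Lipschitz continuous with Lipschitz constant at most h. Set K = λh/ε. Let T > 0 and let c, x: [0, T] → ℝ be measurable with x(t) + c(t) ≥ 0 for almost every t ∈ [0, T], such that x, x·g(x + c) and (x∧K)·g((x∧K) + c) are integrable on [0, T]. Define y(t) = min(x(t), K), X_T = ∫₀ᵀ x(t) dt and Y_T = ∫₀ᵀ y(t) dt. Then for every p ∈ ℝ: −∫₀ᵀ y(t)·g(y(t) + c(t)) dt + H(p + λ Y_T) ≥ −∫₀ᵀ x(t)·g(x(t) + c(t)) dt + H(p + λ X_T). -/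
/-!
Since `g' ≥ ε`, cutting the speed `x` down to `K` wherever `x > K` saves at least `ε K (x - K)`
in liquidity costs (this uses `x + c ≥ 0`, which makes `g (x + c) ≥ 0`). Integrating, the saving
is at least `ε K (X_T - Y_T) = λ h (X_T - Y_T)`, which is exactly the most the `h`-Lipschitz
payoff can lose when the final price drops by `λ (X_T - Y_T)`.
-/

open MeasureTheory

lemma cost_sub_truncated_cost_ge {g : ℝ → ℝ} {ε K u v : ℝ} (hε : 0 ≤ ε)
    (hg : ∀ ⦃a b⦄, a ≤ b → ε * (b - a) ≤ g b - g a) (hg0 : g 0 = 0) (hK : 0 ≤ K)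
    (huv : 0 ≤ u + v) :
    ε * K * (u - min u K) ≤ u * g (u + v) - min u K * g (min u K + v) := by
  rcases le_or_gt u K with hu | hu
  · simp [min_eq_left hu]
  · rw [min_eq_right hu.le]
    have hgrowth : ε * (u - K) ≤ g (u + v) - g (K + v) := by
      simpa using hg (show K + v ≤ u + v by linarith)
    have hnonneg : 0 ≤ g (u + v) := by
      have := hg huv
      rw [hg0] at this
      nlinarith
    -- split `u g(u+v) - K g(K+v)` as `K (g(u+v) - g(K+v)) + (u - K) g(u+v)`
    nlinarith [mul_le_mul_of_nonneg_left hgrowth hK, mul_nonneg (sub_nonneg.2 hu.le) hnonneg]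

lemma integral_cost_sub_truncated_cost_ge {α : Type*} [MeasurableSpace α] {μ : Measure α}
    [IsFiniteMeasure μ] {g : ℝ → ℝ} {ε K : ℝ} {x c : α → ℝ} (hε : 0 ≤ ε)
    (hg : ∀ ⦃a b⦄, a ≤ b → ε * (b - a) ≤ g b - g a) (hg0 : g 0 = 0) (hK : 0 ≤ K)
    (hpos : ∀ᵐ t ∂μ, 0 ≤ x t + c t) (hx : Integrable x μ)
    (hcost : Integrable (fun t => x t * g (x t + c t)) μ)
    (hcostK : Integrable (fun t => min (x t) K * g (min (x t) K + c t)) μ) :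
    ε * K * ((∫ t, x t ∂μ) - ∫ t, min (x t) K ∂μ) ≤
      (∫ t, x t * g (x t + c t) ∂μ) - ∫ t, min (x t) K * g (min (x t) K + c t) ∂μ := by
  have hxK : Integrable (fun t => min (x t) K) μ := hx.inf (integrable_const K)
  rw [← integral_sub hx hxK, ← integral_const_mul, ← integral_sub hcost hcostK]
  refine integral_mono_ae ((hx.sub hxK).const_mul _) (hcost.sub hcostK) ?_
  filter_upwards [hpos] with t ht
  exact cost_sub_truncated_cost_ge hε hg hg0 hK ht

lemma LipschitzWith.sub_le_mul_sub {f : ℝ → ℝ} {L : NNReal} (hf : LipschitzWith L f) {a b : ℝ}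
    (hab : a ≤ b) : f b - f a ≤ L * (b - a) := by
  have := hf.dist_le_mul b a
  rw [Real.dist_eq, Real.dist_eq, abs_of_nonneg (sub_nonneg.2 hab)] at this
  exact (le_abs_self _).trans this

theorem stmt_3_general (g : ℝ → ℝ) (ε : ℝ) (hε : 0 < ε) (hg : ContDiff ℝ 1 g)
    (hg0 : g 0 = 0) (hg' : ∀ z, ε ≤ deriv g z)
    (lam h : ℝ) (hlam : 0 < lam) (hh : 0 ≤ h)
    (H : ℝ → ℝ) (hH : LipschitzWith h.toNNReal H)
    (K : ℝ) (hK : K = lam * h / ε)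
    (T : ℝ)
    (c x : ℝ → ℝ)
    (hpos : ∀ᵐ t ∂(volume.restrict (Set.Icc (0 : ℝ) T)), 0 ≤ x t + c t)
    (hxint : IntegrableOn x (Set.Icc (0 : ℝ) T))
    (hint1 : IntegrableOn (fun t => x t * g (x t + c t)) (Set.Icc (0 : ℝ) T))
    (hint2 : IntegrableOn (fun t => min (x t) K * g (min (x t) K + c t))
      (Set.Icc (0 : ℝ) T)) :
    ∀ p : ℝ,
      -(∫ t in Set.Icc (0 : ℝ) T, min (x t) K * g (min (x t) K + c t)) +
          H (p + lam * ∫ t in Set.Icc (0 : ℝ) T, min (x t) K)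
        ≥ -(∫ t in Set.Icc (0 : ℝ) T, x t * g (x t + c t)) +
            H (p + lam * ∫ t in Set.Icc (0 : ℝ) T, x t) := by
  intro p
  have hK0 : 0 ≤ K := by rw [hK]; positivity
  have hεK : ε * K = lam * h := by rw [hK]; field_simp
  have hgrowth := mul_sub_le_image_sub_of_le_deriv (hg.differentiable one_ne_zero) hg'
  have hsaving := integral_cost_sub_truncated_cost_ge hε.le hgrowth hg0 hK0 hpos hxint hint1 hint2
  have hYX : ∫ t in Set.Icc (0 : ℝ) T, min (x t) K ≤ ∫ t in Set.Icc (0 : ℝ) T, x t :=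
    integral_mono (hxint.inf (integrable_const K)) hxint fun t => min_le_left _ _
  have hloss := hH.sub_le_mul_sub
    (show p + lam * ∫ t in Set.Icc (0 : ℝ) T, min (x t) K ≤
      p + lam * ∫ t in Set.Icc (0 : ℝ) T, x t by gcongr)
  rw [Real.coe_toNNReal h hh] at hloss
  rw [hεK] at hsaving
  linarith

/-- Pathwise truncation estimate: truncating the trading speed `x` at `K = λh/ε`
does not decrease the payoff (liquidity costs plus Lipschitz option payoff) when
the aggregate trading speed `x + c` is nonnegative a.e. -/
theorem stmt_3 (g : ℝ → ℝ) (ε : ℝ) (hε : 0 < ε) (hg : ContDiff ℝ 1 g)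
    (hg0 : g 0 = 0) (hg' : ∀ z, ε ≤ deriv g z)
    (lam h : ℝ) (hlam : 0 < lam) (hh : 0 ≤ h)
    (H : ℝ → ℝ) (hH : LipschitzWith h.toNNReal H)
    (K : ℝ) (hK : K = lam * h / ε)
    (T : ℝ) (hT : 0 < T)
    (c x : ℝ → ℝ) (hc : Measurable c) (hx : Measurable x)
    (hpos : ∀ᵐ t ∂(volume.restrict (Set.Icc (0 : ℝ) T)), 0 ≤ x t + c t)
    (hxint : IntegrableOn x (Set.Icc (0 : ℝ) T))
    (hint1 : IntegrableOn (fun t => x t * g (x t + c t)) (Set.Icc (0 : ℝ) T))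
    (hint2 : IntegrableOn (fun t => min (x t) K * g (min (x t) K + c t))
      (Set.Icc (0 : ℝ) T)) :
    ∀ p : ℝ,
      -(∫ t in Set.Icc (0 : ℝ) T, min (x t) K * g (min (x t) K + c t)) +
          H (p + lam * ∫ t in Set.Icc (0 : ℝ) T, min (x t) K)
        ≥ -(∫ t in Set.Icc (0 : ℝ) T, x t * g (x t + c t)) +
            H (p + lam * ∫ t in Set.Icc (0 : ℝ) T, x t) :=
  stmt_3_general g ε hε hg hg0 hg' lam h hlam hh H hH K hK T c x hpos hxint hint1 hint2
end

section
/- Let σ, λ, κ, T > 0 and α > 0 with λ² ≠ 2κσ²α, and set B := λ²/(2κ) − σ²α (so B ≠ 0). Let H: ℝ → ℝ be bounded and continuous. Define v(t, p) = (σ²/B) · log ∫_ℝ exp( (B/σ²) · H( p + σ√(T − t) z ) ) dγ(z) for (t,p) ∈ [0,T) × ℝ, where γ is the standard Gaussian measure on ℝ. Then v is of class C^{1,2} on [0,T) × ℝ, satisfies 0 = v_t + (1/2)σ² v_pp + ( λ²/(4κ) − (1/2)σ²α ) (v_p)² on [0, T) × ℝ, and v(t, p) → H(p) as t → T for every p.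 -/
/-! With `c = B/σ²`, the integral `u(t,p) = ∫ exp(c H(p + σ√(T−t) z)) dγ(z)` is the heat flow of
`G = exp(c H)` run for variance `w = σ²(T−t)`, i.e. the convolution of `G` with the Gaussian kernel
`K(w,p,y)`. The kernel and its derivatives are dominated by `(1 + y²) exp(-y²/(4w))` locally
uniformly in `(w,p)`, so one may differentiate under the integral sign: `u` is `C²` in `p` and
solves the backward heat equation `u_t + ½σ² u_pp = 0` because `K` solves `K_w = ½ K_pp`.
The Cole–Hopf transform `v = (1/c) log u` turns this linear equation into the quadratic one, whose
coefficient `σ²c/2 = B/2` is exactly `λ²/(4κ) − ½σ²α`. The terminal value follows by dominated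
convergence as the Gaussian variance shrinks to zero. -/

open MeasureTheory ProbabilityTheory Real Set Filter Topology
open scoped NNReal

noncomputable section

def heatKernel (w p y : ℝ) : ℝ := (√(2 * π * w))⁻¹ * exp (-(y - p) ^ 2 / (2 * w))

def heatKernelDeriv (w p y : ℝ) : ℝ := heatKernel w p y * ((y - p) / w)

def heatKernelDeriv2 (w p y : ℝ) : ℝ := heatKernel w p y * ((y - p) ^ 2 / w ^ 2 - 1 / w)

section HeatKernel

variable {w p y : ℝ}

lemma heatKernel_nonneg (w p y : ℝ) : 0 ≤ heatKernel w p y := by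
  unfold heatKernel; positivity

lemma continuous_heatKernel (w p : ℝ) : Continuous (heatKernel w p) := by
  unfold heatKernel; fun_prop

lemma continuous_heatKernelDeriv (w p : ℝ) : Continuous (heatKernelDeriv w p) := by
  unfold heatKernelDeriv heatKernel; fun_prop

lemma continuous_heatKernelDeriv2 (w p : ℝ) : Continuous (heatKernelDeriv2 w p) := by
  unfold heatKernelDeriv2 heatKernel; fun_prop

lemma continuous_heatKernelDeriv2_mean (w y : ℝ) : Continuous fun p => heatKernelDeriv2 w p y := by
  unfold heatKernelDeriv2 heatKernel; fun_prop

lemma hasDerivAt_heatKernel (hw : w ≠ 0) :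
    HasDerivAt (fun p => heatKernel w p y) (heatKernelDeriv w p y) p := by
  refine ((((hasDerivAt_id p).const_sub y).pow 2).neg.div_const (2 * w)).exp.const_mul
    (√(2 * π * w))⁻¹ |>.congr_deriv ?_
  simp only [heatKernelDeriv, heatKernel, id, Pi.pow_apply, Pi.neg_apply]
  field_simp
  ring

lemma hasDerivAt_heatKernelDeriv (hw : w ≠ 0) :
    HasDerivAt (fun p => heatKernelDeriv w p y) (heatKernelDeriv2 w p y) p := by
  refine (hasDerivAt_heatKernel hw).mul (((hasDerivAt_id p).const_sub y).div_const w)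
    |>.congr_deriv ?_
  simp only [heatKernelDeriv2, heatKernelDeriv, id]
  field_simp
  ring

-- The heat equation `∂_w K = ½ ∂_p² K`.
lemma hasDerivAt_heatKernel_variance (hw : 0 < w) :
    HasDerivAt (fun w => heatKernel w p y) (heatKernelDeriv2 w p y / 2) w := by
  have h2πw : 0 < 2 * π * w := by positivity
  have hsqrt := (((hasDerivAt_id w).const_mul (2 * π)).sqrt h2πw.ne').inv (by positivity)
  have hexp := ((hasDerivAt_inv hw.ne').const_mul (-(y - p) ^ 2 / 2)).exp
  have hK : (fun w => heatKernel w p y)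
      = fun w => (√(2 * π * w))⁻¹ * exp (-(y - p) ^ 2 / 2 * w⁻¹) := by
    ext w; simp only [heatKernel, div_eq_mul_inv, mul_inv, mul_comm, mul_left_comm]
  rw [hK]
  refine (hsqrt.mul hexp).congr_deriv ?_
  have hsq : √(2 * π * w) ^ 2 = 2 * π * w := sq_sqrt h2πw.le
  have hs : √(2 * π * w) ≠ 0 := by positivity
  simp only [heatKernelDeriv2, heatKernel, id, Pi.inv_apply]
  field_simp
  linear_combination w * hsq

end HeatKernel

section Majorant

variable {w w₁ w₂ p P : ℝ}

def heatKernelMajorant (w y : ℝ) : ℝ := (1 + y ^ 2) * exp (-(4 * w)⁻¹ * y ^ 2)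

lemma integrable_heatKernelMajorant (hw : 0 < w) : Integrable (heatKernelMajorant w) := by
  have hb : 0 < (4 * w)⁻¹ := by positivity
  have h2 := integrable_rpow_mul_exp_neg_mul_sq hb (s := 2) (by norm_num)
  simp only [rpow_two] at h2
  refine ((integrable_exp_neg_mul_sq hb).add h2).congr (.of_forall fun y => ?_)
  simp only [heatKernelMajorant, Pi.add_apply]
  ring

lemma heatKernel_le_of_mem_Icc (hw₁ : 0 < w₁) (hw : w ∈ Icc w₁ w₂) (hp : |p| ≤ P) (y : ℝ) :
    heatKernel w p y ≤ (√(2 * π * w₁))⁻¹ * exp (P ^ 2 / (2 * w₁)) * exp (-(4 * w₂)⁻¹ * y ^ 2) := by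
  have hw₀ : 0 < w := hw₁.trans_le hw.1
  have hp2 : p ^ 2 ≤ P ^ 2 := sq_le_sq' (abs_le.1 hp).1 (abs_le.1 hp).2
  rw [heatKernel, mul_assoc (√(2 * π * w₁))⁻¹, ← exp_add]
  refine mul_le_mul (by gcongr; exact hw.1) (exp_le_exp.2 ?_) (exp_pos _).le (by positivity)
  -- completing the square: `2 (y - p)² ≥ y² - 2 p²`
  have hsq : p ^ 2 / (2 * w) - y ^ 2 / (4 * w) - (-(y - p) ^ 2 / (2 * w))
      = (y - 2 * p) ^ 2 / (4 * w) := by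
    field_simp; ring
  calc -(y - p) ^ 2 / (2 * w) ≤ p ^ 2 / (2 * w) - y ^ 2 / (4 * w) := by
        linarith [show 0 ≤ (y - 2 * p) ^ 2 / (4 * w) by positivity]
    _ ≤ P ^ 2 / (2 * w₁) - y ^ 2 / (4 * w₂) := by gcongr <;> linarith [hw.1, hw.2]
    _ = P ^ 2 / (2 * w₁) + -(4 * w₂)⁻¹ * y ^ 2 := by ring

lemma exists_heatKernel_factor_bound (w₁ P : ℝ) (hw₁ : 0 < w₁) :
    ∃ A, ∀ w, w₁ ≤ w → ∀ p, |p| ≤ P → ∀ y,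
      1 ≤ A * (1 + y ^ 2) ∧ |(y - p) / w| ≤ A * (1 + y ^ 2) ∧
      |(y - p) ^ 2 / w ^ 2 - 1 / w| ≤ A * (1 + y ^ 2) := by
  refine ⟨1 + (1 + P) / w₁ + (2 + 2 * P ^ 2) / w₁ ^ 2 + 1 / w₁, fun w hw p hp y => ?_⟩
  have hP : 0 ≤ P := (abs_nonneg p).trans hp
  have hw₀ : 0 < w := hw₁.trans_le hw
  have hy : |y| ≤ 1 + y ^ 2 :=
    abs_le.2 ⟨by nlinarith [sq_nonneg (y + 1)], by nlinarith [sq_nonneg (y - 1)]⟩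
  have h₁ : |(y - p) / w| ≤ (1 + P) * (1 + y ^ 2) / w₁ := by
    rw [abs_div, abs_of_pos hw₀]
    exact div_le_div₀ (by positivity)
      (by nlinarith [abs_sub y p, mul_nonneg hP (sq_nonneg y)]) hw₁ hw
  have h₂ : |(y - p) ^ 2 / w ^ 2 - 1 / w|
      ≤ (2 + 2 * P ^ 2) * (1 + y ^ 2) / w₁ ^ 2 + (1 + y ^ 2) / w₁ := by
    refine (abs_sub _ _).trans ?_
    rw [abs_of_nonneg (by positivity), abs_of_nonneg (by positivity)]
    have hyp2 : (y - p) ^ 2 ≤ (2 + 2 * P ^ 2) * (1 + y ^ 2) := by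
      nlinarith [sq_nonneg (y + p), abs_le.1 hp, mul_nonneg (sq_nonneg P) (sq_nonneg y)]
    gcongr ?_ + ?_
    · exact div_le_div₀ (by positivity) hyp2 (by positivity) (by gcongr)
    · exact div_le_div₀ (by positivity) (by nlinarith) hw₁ hw
  have hA : (1 + (1 + P) / w₁ + (2 + 2 * P ^ 2) / w₁ ^ 2 + 1 / w₁) * (1 + y ^ 2)
      = (1 + y ^ 2) + (1 + P) * (1 + y ^ 2) / w₁
        + ((2 + 2 * P ^ 2) * (1 + y ^ 2) / w₁ ^ 2 + (1 + y ^ 2) / w₁) := by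
    field_simp
    ring
  have : 0 ≤ (1 + P) * (1 + y ^ 2) / w₁ := by positivity
  have : 0 ≤ (2 + 2 * P ^ 2) * (1 + y ^ 2) / w₁ ^ 2 + (1 + y ^ 2) / w₁ := by positivity
  rw [hA]
  exact ⟨by nlinarith [sq_nonneg y], by nlinarith [sq_nonneg y], by nlinarith [sq_nonneg y]⟩

lemma exists_heatKernel_bound (w₁ w₂ P : ℝ) (hw₁ : 0 < w₁) :
    ∃ C, ∀ w ∈ Icc w₁ w₂, ∀ p, |p| ≤ P → ∀ y,
      |heatKernel w p y| ≤ C * heatKernelMajorant w₂ y ∧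
      |heatKernelDeriv w p y| ≤ C * heatKernelMajorant w₂ y ∧
      |heatKernelDeriv2 w p y| ≤ C * heatKernelMajorant w₂ y := by
  obtain ⟨A, hA⟩ := exists_heatKernel_factor_bound w₁ P hw₁
  refine ⟨(√(2 * π * w₁))⁻¹ * exp (P ^ 2 / (2 * w₁)) * A, fun w hw p hp y => ?_⟩
  have key : ∀ m, |m| ≤ A * (1 + y ^ 2) → |heatKernel w p y * m|
      ≤ (√(2 * π * w₁))⁻¹ * exp (P ^ 2 / (2 * w₁)) * A * heatKernelMajorant w₂ y := by
    intro m hm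
    rw [abs_mul, abs_of_nonneg (heatKernel_nonneg w p y), heatKernelMajorant]
    calc _ ≤ (√(2 * π * w₁))⁻¹ * exp (P ^ 2 / (2 * w₁)) * exp (-(4 * w₂)⁻¹ * y ^ 2)
          * (A * (1 + y ^ 2)) :=
          mul_le_mul (heatKernel_le_of_mem_Icc hw₁ hw hp y) hm (abs_nonneg _) (by positivity)
      _ = _ := by ring
  obtain ⟨h₀, h₁, h₂⟩ := hA w hw.1 p hp y
  exact ⟨by simpa using key 1 (by rwa [abs_one]), key _ h₁, key _ h₂⟩

end Majorant

lemma hasDerivAt_integral_bdd_mul {α : Type*} [MeasurableSpace α] {μ : Measure α}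
    {G : α → ℝ} {M : ℝ} {F F' : ℝ → α → ℝ} {bound : α → ℝ} {s : Set ℝ} {x₀ : ℝ}
    (hG : AEStronglyMeasurable G μ) (hGM : ∀ y, |G y| ≤ M) (hs : s ∈ 𝓝 x₀)
    (hF : ∀ x, AEStronglyMeasurable (F x) μ) (hF' : AEStronglyMeasurable (F' x₀) μ)
    (hbound : Integrable bound μ) (hFle : ∀ y, |F x₀ y| ≤ bound y)
    (hF'le : ∀ x ∈ s, ∀ y, |F' x y| ≤ bound y)
    (hderiv : ∀ x ∈ s, ∀ y, HasDerivAt (F · y) (F' x y) x) :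
    HasDerivAt (fun x => ∫ y, G y * F x y ∂μ) (∫ y, G y * F' x₀ y ∂μ) x₀ := by
  refine (hasDerivAt_integral_of_dominated_loc_of_deriv_le hs (.of_forall fun x => hG.mul (hF x))
    ((hbound.mono' (hF x₀) (.of_forall hFle)).bdd_mul hG (.of_forall hGM)) (hG.mul hF')
    (.of_forall fun y x hx => ?_) (hbound.const_mul M)
    (.of_forall fun y x hx => (hderiv x hx y).const_mul (G y))).2
  rw [norm_mul]
  exact mul_le_mul (hGM y) (hF'le x hx y) (norm_nonneg _) ((abs_nonneg _).trans (hGM y))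

def heatFlow (G : ℝ → ℝ) (w p : ℝ) : ℝ := ∫ y, G y * heatKernel w p y

section HeatFlow

variable {G : ℝ → ℝ} {M w : ℝ}

lemma abs_le_abs_add_one_of_mem_Icc {p x : ℝ} (hx : x ∈ Icc (p - 1) (p + 1)) : |x| ≤ |p| + 1 :=
  abs_le.2 ⟨by linarith [hx.1, neg_abs_le p], by linarith [hx.2, le_abs_self p]⟩

lemma hasDerivAt_heatFlow (hG : Measurable G) (hGM : ∀ y, |G y| ≤ M) (hw : 0 < w) (p : ℝ) :
    HasDerivAt (heatFlow G w) (∫ y, G y * heatKernelDeriv w p y) p := by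
  obtain ⟨C, hC⟩ := exists_heatKernel_bound w w (|p| + 1) hw
  have hbd := fun x (hx : x ∈ Icc (p - 1) (p + 1)) =>
    hC w ⟨le_rfl, le_rfl⟩ x (abs_le_abs_add_one_of_mem_Icc hx)
  exact hasDerivAt_integral_bdd_mul hG.aestronglyMeasurable hGM
    (Icc_mem_nhds (by linarith) (by linarith))
    (fun x => (continuous_heatKernel w x).aestronglyMeasurable)
    (continuous_heatKernelDeriv w p).aestronglyMeasurable
    ((integrable_heatKernelMajorant hw).const_mul C)
    (fun y => (hbd p ⟨by linarith, by linarith⟩ y).1) (fun x hx y => (hbd x hx y).2.1)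
    (fun x _ y => hasDerivAt_heatKernel hw.ne')

lemma hasDerivAt_integral_mul_heatKernelDeriv (hG : Measurable G) (hGM : ∀ y, |G y| ≤ M)
    (hw : 0 < w) (p : ℝ) :
    HasDerivAt (fun q => ∫ y, G y * heatKernelDeriv w q y)
      (∫ y, G y * heatKernelDeriv2 w p y) p := by
  obtain ⟨C, hC⟩ := exists_heatKernel_bound w w (|p| + 1) hw
  have hbd := fun x (hx : x ∈ Icc (p - 1) (p + 1)) =>
    hC w ⟨le_rfl, le_rfl⟩ x (abs_le_abs_add_one_of_mem_Icc hx)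
  exact hasDerivAt_integral_bdd_mul hG.aestronglyMeasurable hGM
    (Icc_mem_nhds (by linarith) (by linarith))
    (fun x => (continuous_heatKernelDeriv w x).aestronglyMeasurable)
    (continuous_heatKernelDeriv2 w p).aestronglyMeasurable
    ((integrable_heatKernelMajorant hw).const_mul C)
    (fun y => (hbd p ⟨by linarith, by linarith⟩ y).2.1) (fun x hx y => (hbd x hx y).2.2)
    (fun x _ y => hasDerivAt_heatKernelDeriv hw.ne')

lemma hasDerivAt_heatFlow_variance (hG : Measurable G) (hGM : ∀ y, |G y| ≤ M) (hw : 0 < w)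
    (p : ℝ) :
    HasDerivAt (fun w => heatFlow G w p) ((∫ y, G y * heatKernelDeriv2 w p y) / 2) w := by
  obtain ⟨C, hC⟩ := exists_heatKernel_bound (w / 2) (2 * w) |p| (by linarith)
  have hbd := fun x (hx : x ∈ Icc (w / 2) (2 * w)) => hC x hx p le_rfl
  rw [← integral_div]
  simp_rw [mul_div_assoc]
  exact hasDerivAt_integral_bdd_mul hG.aestronglyMeasurable hGM
    (Icc_mem_nhds (show w / 2 < w by linarith) (show w < 2 * w by linarith))
    (fun x => (continuous_heatKernel x p).aestronglyMeasurable)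
    ((continuous_heatKernelDeriv2 w p).div_const 2).aestronglyMeasurable
    ((integrable_heatKernelMajorant (by linarith)).const_mul C)
    (fun y => (hbd w ⟨by linarith, by linarith⟩ y).1)
    (fun x hx y => by
      rw [abs_div, abs_two]
      linarith [(hbd x hx y).2.2, abs_nonneg (heatKernelDeriv2 x p y)])
    (fun x hx y => hasDerivAt_heatKernel_variance (by linarith [hx.1]))

lemma continuous_integral_mul_heatKernelDeriv2 (hG : Measurable G) (hGM : ∀ y, |G y| ≤ M)
    (hw : 0 < w) : Continuous fun p => ∫ y, G y * heatKernelDeriv2 w p y := by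
  have hM : 0 ≤ M := (abs_nonneg _).trans (hGM 0)
  refine continuous_iff_continuousAt.2 fun p => ?_
  obtain ⟨C, hC⟩ := exists_heatKernel_bound w w (|p| + 1) hw
  refine continuousAt_of_dominated
    (.of_forall fun x => hG.aestronglyMeasurable.mul
      (continuous_heatKernelDeriv2 w x).aestronglyMeasurable) ?_
    ((integrable_heatKernelMajorant hw).const_mul (M * C))
    (.of_forall fun y => (continuous_const.mul (continuous_heatKernelDeriv2_mean w y)).continuousAt)
  filter_upwards [Icc_mem_nhds (show p - 1 < p by linarith) (show p < p + 1 by linarith)]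
    with x hx
  refine .of_forall fun y => ?_
  rw [norm_mul, mul_assoc]
  exact mul_le_mul (hGM y) (hC w ⟨le_rfl, le_rfl⟩ x (abs_le_abs_add_one_of_mem_Icc hx) y).2.2
    (norm_nonneg _) hM

lemma contDiff_heatFlow (hG : Measurable G) (hGM : ∀ y, |G y| ≤ M) (hw : 0 < w) :
    ContDiff ℝ 2 (heatFlow G w) := by
  have h₁ : deriv (heatFlow G w) = fun p => ∫ y, G y * heatKernelDeriv w p y :=
    funext fun p => (hasDerivAt_heatFlow hG hGM hw p).deriv
  have h₂ : deriv (fun p => ∫ y, G y * heatKernelDeriv w p y)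
      = fun p => ∫ y, G y * heatKernelDeriv2 w p y :=
    funext fun p => (hasDerivAt_integral_mul_heatKernelDeriv hG hGM hw p).deriv
  rw [show (2 : WithTop ℕ∞) = 1 + 1 from rfl, contDiff_succ_iff_deriv, h₁, contDiff_one_iff_deriv,
    h₂]
  exact ⟨fun p => (hasDerivAt_heatFlow hG hGM hw p).differentiableAt, by simp,
    fun p => (hasDerivAt_integral_mul_heatKernelDeriv hG hGM hw p).differentiableAt,
    continuous_integral_mul_heatKernelDeriv2 hG hGM hw⟩

lemma heatFlow_pos (hG : Measurable G) (hGM : ∀ y, |G y| ≤ M) (hGpos : ∀ y, 0 < G y)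
    (hw : 0 < w) (p : ℝ) : 0 < heatFlow G w p := by
  obtain ⟨C, hC⟩ := exists_heatKernel_bound w w |p| hw
  have hK : ∀ y, 0 < heatKernel w p y := fun y => by unfold heatKernel; positivity
  have hint : Integrable (fun y => G y * heatKernel w p y) :=
    ((integrable_heatKernelMajorant hw).const_mul C).mono'
      (continuous_heatKernel w p).aestronglyMeasurable
      (.of_forall fun y => (hC w ⟨le_rfl, le_rfl⟩ p le_rfl y).1) |>.bdd_mul
      hG.aestronglyMeasurable (.of_forall hGM)
  rw [heatFlow, integral_pos_iff_support_of_nonneg (fun y => (mul_pos (hGpos y) (hK y)).le) hint,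
    Function.support_eq_univ fun y => (mul_pos (hGpos y) (hK y)).ne']
  simp

end HeatFlow

lemma integral_gaussianReal_comp_add_mul {G : ℝ → ℝ} (hG : Measurable G) {s : ℝ} (hs : s ≠ 0)
    (p : ℝ) : ∫ z, G (p + s * z) ∂gaussianReal 0 1 = heatFlow G (s ^ 2) p := by
  have hmap :
      (gaussianReal 0 1).map (fun z => p + s * z) = gaussianReal p ⟨s ^ 2, sq_nonneg s⟩ := by
    rw [show (fun z => p + s * z) = (p + ·) ∘ (s * ·) from rfl,
      ← Measure.map_map (measurable_const_add p) (measurable_const_mul s),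
      gaussianReal_map_const_mul, gaussianReal_map_const_add]
    simp only [mul_zero, zero_add, mul_one]
    rfl
  have hv : (⟨s ^ 2, sq_nonneg s⟩ : ℝ≥0) ≠ 0 := fun h =>
    pow_ne_zero 2 hs (congrArg NNReal.toReal h)
  rw [← integral_map (by fun_prop) hG.aestronglyMeasurable, hmap,
    integral_gaussianReal_eq_integral_smul hv, heatFlow]
  congr 1 with y
  rw [smul_eq_mul, mul_comm]
  rfl

lemma tendsto_integral_comp_add_mul {ι : Type*} {l : Filter ι} [l.IsCountablyGenerated]
    {μ : Measure ℝ} [IsProbabilityMeasure μ] {G : ℝ → ℝ} {M : ℝ} {s : ι → ℝ}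
    (hG : Continuous G) (hGM : ∀ y, |G y| ≤ M) (hs : Tendsto s l (𝓝 0)) (p : ℝ) :
    Tendsto (fun i => ∫ z, G (p + s i * z) ∂μ) l (𝓝 (G p)) := by
  have hlin : ∀ z : ℝ, Tendsto (fun i => p + s i * z) l (𝓝 p) := fun z => by
    simpa using tendsto_const_nhds.add (hs.mul_const z)
  simpa using tendsto_integral_filter_of_dominated_convergence (fun _ => M)
    (.of_forall fun i => (hG.comp (by fun_prop)).aestronglyMeasurable)
    (.of_forall fun i => .of_forall fun z => hGM _) (integrable_const (μ := μ) M)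
    (.of_forall fun z => (hG.tendsto p).comp (hlin z))

theorem coleHopf_transform {u : ℝ → ℝ → ℝ} {u₁ : ℝ → ℝ} {uₜ u₂ a σ t p : ℝ}
    (hu : ∀ q, u t q ≠ 0) (hₜ : HasDerivAt (fun s => u s p) uₜ t)
    (h₁ : ∀ q, HasDerivAt (u t) (u₁ q) q) (h₂ : HasDerivAt u₁ u₂ p)
    (heat : uₜ + σ ^ 2 / 2 * u₂ = 0) :
    deriv (fun s => a * log (u s p)) t + 1 / 2 * σ ^ 2 * deriv (deriv fun q => a * log (u t q)) p
      + σ ^ 2 / (2 * a) * deriv (fun q => a * log (u t q)) p ^ 2 = 0 := by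
  have hd : deriv (fun q => a * log (u t q)) = fun q => a * (u₁ q / u t q) :=
    funext fun q => (((h₁ q).log (hu q)).const_mul a).deriv
  have hdd : deriv (fun q => a * (u₁ q / u t q)) p
      = a * ((u₂ * u t p - u₁ p * u₁ p) / u t p ^ 2) :=
    ((h₂.div (h₁ p) (hu p)).const_mul a).deriv
  rw [((hₜ.log (hu p)).const_mul a).deriv, hd, hdd]
  have hup := hu p
  field_simp
  linear_combination (2 * a * u t p) * heat

section BackwardHeatFlow

variable {G : ℝ → ℝ} {M σ T t : ℝ}

lemma hasDerivAt_heatFlow_backward (hG : Measurable G) (hGM : ∀ y, |G y| ≤ M)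
    (hw : 0 < σ ^ 2 * (T - t)) (p : ℝ) :
    HasDerivAt (fun s => heatFlow G (σ ^ 2 * (T - s)) p)
      (-(σ ^ 2 / 2) * ∫ y, G y * heatKernelDeriv2 (σ ^ 2 * (T - t)) p y) t := by
  refine (hasDerivAt_heatFlow_variance hG hGM hw p).comp t
    (((hasDerivAt_id t).const_sub T).const_mul (σ ^ 2)) |>.congr_deriv ?_
  ring

theorem coleHopf_heatFlow_backward (hG : Measurable G) (hGM : ∀ y, |G y| ≤ M)
    (hGpos : ∀ y, 0 < G y) (hw : 0 < σ ^ 2 * (T - t)) (a p : ℝ) :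
    deriv (fun s => a * log (heatFlow G (σ ^ 2 * (T - s)) p)) t
      + 1 / 2 * σ ^ 2 * deriv (deriv fun q => a * log (heatFlow G (σ ^ 2 * (T - t)) q)) p
      + σ ^ 2 / (2 * a) * deriv (fun q => a * log (heatFlow G (σ ^ 2 * (T - t)) q)) p ^ 2
      = 0 :=
  coleHopf_transform (u := fun s q => heatFlow G (σ ^ 2 * (T - s)) q)
    (fun q => (heatFlow_pos hG hGM hGpos hw q).ne') (hasDerivAt_heatFlow_backward hG hGM hw p)
    (hasDerivAt_heatFlow hG hGM hw) (hasDerivAt_integral_mul_heatKernelDeriv hG hGM hw p)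
    (by ring)

end BackwardHeatFlow

end

theorem stmt_13_general (σ lam κ T α : ℝ) (hσ : 0 < σ) (hκ : 0 < κ)
    (hne : lam ^ 2 ≠ 2 * κ * σ ^ 2 * α)
    (B : ℝ) (hB : B = lam ^ 2 / (2 * κ) - σ ^ 2 * α)
    (H : ℝ → ℝ) (hHb : ∃ M, ∀ p, |H p| ≤ M) (hHc : Continuous H)
    (v : ℝ → ℝ → ℝ)
    (hv : ∀ t p, v t p = (σ ^ 2 / B) * Real.log
      (∫ z, Real.exp ((B / σ ^ 2) * H (p + σ * Real.sqrt (T - t) * z))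
        ∂(gaussianReal 0 1))) :
    (∀ p : ℝ, ∀ t ∈ Set.Ico (0 : ℝ) T,
      DifferentiableAt ℝ (fun s => v s p) t) ∧
    (∀ t ∈ Set.Ico (0 : ℝ) T, ContDiff ℝ 2 (fun p => v t p)) ∧
    (∀ t ∈ Set.Ico (0 : ℝ) T, ∀ p : ℝ,
      0 = deriv (fun s => v s p) t
        + (1 / 2) * σ ^ 2 * deriv (deriv (fun q => v t q)) p
        + (lam ^ 2 / (4 * κ) - (1 / 2) * σ ^ 2 * α)
          * (deriv (fun q => v t q) p) ^ 2) ∧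
    (∀ p : ℝ, Filter.Tendsto (fun t => v t p)
      (nhdsWithin T (Set.Iio T)) (nhds (H p))) := by
  obtain ⟨M, hM⟩ := hHb
  have hB₀ : B ≠ 0 := by
    rw [hB]; intro h; apply hne; field_simp at h; linarith
  set G : ℝ → ℝ := fun y => exp (B / σ ^ 2 * H y) with hG_def
  have hGc : Continuous G := by fun_prop
  have hGpos : ∀ y, 0 < G y := fun y => exp_pos _
  have hGM : ∀ y, |G y| ≤ exp (|B / σ ^ 2| * M) := fun y => by
    rw [abs_of_pos (exp_pos _), exp_le_exp]
    exact (le_abs_self _).trans (by rw [abs_mul]; gcongr; exact hM y)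
  have hw : ∀ t < T, 0 < σ ^ 2 * (T - t) := fun t ht => by have := sub_pos.2 ht; positivity
  have hv_p : ∀ t < T,
      (fun q => v t q) = fun q => σ ^ 2 / B * log (heatFlow G (σ ^ 2 * (T - t)) q) :=
    fun t ht => funext fun q => by
      have hTt := sub_pos.2 ht
      rw [hv, integral_gaussianReal_comp_add_mul hGc.measurable (by positivity), mul_pow,
        sq_sqrt hTt.le]
  have hv_t : ∀ p, ∀ t < T,
      (fun s => v s p) =ᶠ[𝓝 t] fun s => σ ^ 2 / B * log (heatFlow G (σ ^ 2 * (T - s)) p) :=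
    fun p t ht => eventually_of_mem (Iio_mem_nhds ht) fun s hs => congrFun (hv_p s hs) p
  refine ⟨fun p t ht => ?_, fun t ht => ?_, fun t ht p => ?_, fun p => ?_⟩
  · exact (((hasDerivAt_heatFlow_backward hGc.measurable hGM (hw t ht.2) p).log
      (heatFlow_pos hGc.measurable hGM hGpos (hw t ht.2) p).ne').const_mul _
      ).differentiableAt.congr_of_eventuallyEq (hv_t p t ht.2)
  · rw [hv_p t ht.2]
    exact contDiff_const.mul ((contDiff_heatFlow hGc.measurable hGM (hw t ht.2)).log
      fun q => (heatFlow_pos hGc.measurable hGM hGpos (hw t ht.2) q).ne')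
  · have hcoef : lam ^ 2 / (4 * κ) - 1 / 2 * σ ^ 2 * α = σ ^ 2 / (2 * (σ ^ 2 / B)) := by
      rw [hB]; field_simp; ring
    rw [(hv_t p t ht.2).deriv_eq, hv_p t ht.2, hcoef, coleHopf_heatFlow_backward
      hGc.measurable hGM hGpos (hw t ht.2)]
  · have hs : Tendsto (fun t => σ * √(T - t)) (𝓝[<] T) (𝓝 0) := by
      simpa using ((show Continuous fun t => σ * √(T - t) by fun_prop).tendsto T).mono_left
        nhdsWithin_le_nhds
    have hH : σ ^ 2 / B * log (G p) = H p := by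
      rw [hG_def, log_exp]; field_simp
    rw [← hH]
    exact (((continuousAt_log (hGpos p).ne').tendsto.comp
      (tendsto_integral_comp_add_mul hGc hGM hs p)).const_mul _).congr fun t => (hv t p).symm

/-- Closed-form solution for the single CARA player with linear costs: with
`B = λ²/(2κ) − σ²α ≠ 0`, the Cole–Hopf formula
`v(t,p) = (σ²/B) log ∫ exp((B/σ²) H(p + σ√(T−t) z)) dγ(z)` defines a `C^{1,2}`
solution of `0 = v_t + ½σ²v_pp + (λ²/(4κ) − ½σ²α) v_p²` on `[0,T) × ℝ` with
terminal value `H`. -/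
theorem stmt_13 (σ lam κ T α : ℝ) (hσ : 0 < σ) (hlam : 0 < lam) (hκ : 0 < κ)
    (hT : 0 < T) (hα : 0 < α) (hne : lam ^ 2 ≠ 2 * κ * σ ^ 2 * α)
    (B : ℝ) (hB : B = lam ^ 2 / (2 * κ) - σ ^ 2 * α)
    (H : ℝ → ℝ) (hHb : ∃ M, ∀ p, |H p| ≤ M) (hHc : Continuous H)
    (v : ℝ → ℝ → ℝ)
    (hv : ∀ t p, v t p = (σ ^ 2 / B) * Real.log
      (∫ z, Real.exp ((B / σ ^ 2) * H (p + σ * Real.sqrt (T - t) * z))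
        ∂(gaussianReal 0 1))) :
    (∀ p : ℝ, ∀ t ∈ Set.Ico (0 : ℝ) T,
      DifferentiableAt ℝ (fun s => v s p) t) ∧
    (∀ t ∈ Set.Ico (0 : ℝ) T, ContDiff ℝ 2 (fun p => v t p)) ∧
    (∀ t ∈ Set.Ico (0 : ℝ) T, ∀ p : ℝ,
      0 = deriv (fun s => v s p) t
        + (1 / 2) * σ ^ 2 * deriv (deriv (fun q => v t q)) p
        + (lam ^ 2 / (4 * κ) - (1 / 2) * σ ^ 2 * α)
          * (deriv (fun q => v t q) p) ^ 2) ∧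
    (∀ p : ℝ, Filter.Tendsto (fun t => v t p)
      (nhdsWithin T (Set.Iio T)) (nhds (H p))) :=
  stmt_13_general σ lam κ T α hσ hκ hne B hB H hHb hHc v hv
end

section
/- Let σ > 0, c ∈ ℝ, T > 0 and let v: [0, T] × ℝ → ℝ be a bounded C^{1,2} function with bounded p-derivative satisfying 0 = v_t + (1/2)σ² v_pp + c (v_p)² on [0, T) × ℝ and v(T, p) = 0 for all p. Then v ≡ 0 on [0, T] × ℝ. Consequently, in a zero-sum N-player risk-neutral market game with linear cost g(z) = κz, where the aggregate value function solves this equation with c = λ²N/(κ(N+1)²) and terminal condition Σᵢ Hⁱ = 0, the aggregate equilibrium trading speed (λ/(κ(N+1))) v_p vanishes identically. -/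
/-!
Compare `v` with the barrier `δ e^{A(T-t)} cosh p`. Since `v` is bounded above and `cosh`
grows, `v - barrier` attains its maximum over `[0,T] × ℝ` at some `(t₀, p₀)` with `p₀` inside a
compact window. If `t₀ < T`, the first- and second-order conditions at `(t₀, p₀)` give
`v_t ≤ -A·b`, `v_pp ≤ b` and `|v_p| = |b_p| ≤ b` (with `b` the barrier there); together with
`|v_p| ≤ M` this makes the right-hand side of the equation negative once
`A > σ²/2 + |c| M`. Hence the maximum is taken at `t₀ = T`, where `v = 0`, so `v ≤ barrier`, and
letting `δ → 0` gives `v ≤ 0`. Since `-v` solves the same equation with `-c`, also `v ≥ 0`.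
-/

open Set Filter Topology Real

theorem IsMaxOn.deriv_nonpos_of_Icc {f : ℝ → ℝ} {a b : ℝ} (hab : a < b)
    (hf : DifferentiableAt ℝ f a) (h : IsMaxOn f (Icc a b) a) : deriv f a ≤ 0 := by
  have hcone : b - a ∈ posTangentConeAt (Icc a b) a :=
    mem_posTangentConeAt_of_segment_subset (by simpa using segment_subset_Icc hab.le)
  have := h.localize.hasFDerivWithinAt_nonpos hf.hasDerivAt.hasFDerivAt.hasFDerivWithinAt hcone
  simp only [ContinuousLinearMap.toSpanSingleton_apply, smul_eq_mul] at this
  exact nonpos_of_mul_nonpos_right (by simpa [mul_comm] using this) (sub_pos.2 hab)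

theorem IsLocalMax.deriv_deriv_nonpos {f : ℝ → ℝ} {x₀ : ℝ} (h : IsLocalMax f x₀)
    (hc : ContinuousAt f x₀) : deriv (deriv f) x₀ ≤ 0 := by
  by_contra! hpos
  have hmin := isLocalMin_of_deriv_deriv_pos hpos h.deriv_eq_zero hc
  have hconst : f =ᶠ[𝓝 x₀] fun _ => f x₀ := (h.and hmin).mono fun _ hx => le_antisymm hx.1 hx.2
  simp [hconst.deriv.deriv_eq] at hpos

theorem tendsto_cosh_atTop : Tendsto cosh atTop atTop :=
  tendsto_atTop_mono' _ ((eventually_ge_atTop 0).mono fun x hx =>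
    (self_le_sinh_iff.2 hx).trans (sinh_lt_cosh x).le) tendsto_id

theorem IsLocalMax.deriv_deriv_le_of_sub {f φ : ℝ → ℝ} {x₀ : ℝ} (hf : ContDiff ℝ 2 f)
    (hφ : ContDiff ℝ 2 φ) (h : IsLocalMax (fun x => f x - φ x) x₀) :
    deriv (deriv f) x₀ ≤ deriv (deriv φ) x₀ := by
  have hd : deriv (fun x => f x - φ x) = fun x => deriv f x - deriv φ x :=
    funext fun x =>
      deriv_fun_sub (hf.differentiable two_ne_zero x) (hφ.differentiable two_ne_zero x)
  have := h.deriv_deriv_nonpos (hf.sub hφ).continuous.continuousAt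
  rw [hd, deriv_fun_sub (hf.differentiable_deriv_two x₀) (hφ.differentiable_deriv_two x₀)] at this
  linarith

theorem IsLocalMax.deriv_eq_of_sub {f φ : ℝ → ℝ} {x₀ : ℝ} (hf : DifferentiableAt ℝ f x₀)
    (hφ : DifferentiableAt ℝ φ x₀) (h : IsLocalMax (fun x => f x - φ x) x₀) :
    deriv f x₀ = deriv φ x₀ := by
  have := h.deriv_eq_zero
  rw [deriv_fun_sub hf hφ] at this
  linarith

theorem IsMaxOn.deriv_le_of_sub_Icc {f φ : ℝ → ℝ} {a b : ℝ} (hab : a < b)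
    (hf : DifferentiableAt ℝ f a) (hφ : DifferentiableAt ℝ φ a)
    (h : IsMaxOn (fun x => f x - φ x) (Icc a b) a) : deriv f a ≤ deriv φ a := by
  have := h.deriv_nonpos_of_Icc hab (hf.sub hφ)
  rw [deriv_sub hf hφ] at this
  linarith

noncomputable def barrier (δ A T t p : ℝ) : ℝ := δ * exp (A * (T - t)) * cosh p

section barrier

variable {δ A T t p : ℝ}

theorem barrier_pos (hδ : 0 < δ) : 0 < barrier δ A T t p := by
  unfold barrier; positivity

theorem mul_cosh_le_barrier (hδ : 0 ≤ δ) (hA : 0 ≤ A) (ht : t ≤ T) :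
    δ * cosh p ≤ barrier δ A T t p := by
  unfold barrier
  have : 1 ≤ exp (A * (T - t)) := one_le_exp (mul_nonneg hA (sub_nonneg.2 ht))
  gcongr
  nlinarith [cosh_pos p]

theorem hasDerivAt_barrier_time :
    HasDerivAt (fun s => barrier δ A T s p) (-A * barrier δ A T t p) t := by
  unfold barrier
  exact ((((hasDerivAt_id' t).const_sub T).const_mul A).exp.const_mul δ |>.mul_const
    (cosh p)).congr_deriv (by ring)

theorem deriv_barrier_space :
    deriv (barrier δ A T t) = fun q => δ * exp (A * (T - t)) * sinh q := by
  funext q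
  show deriv (fun p => barrier δ A T t p) q = _
  simp [barrier]

theorem deriv_deriv_barrier_space :
    deriv (deriv (barrier δ A T t)) = barrier δ A T t := by
  rw [deriv_barrier_space]; funext q; simp [barrier]

theorem contDiff_barrier_space : ContDiff ℝ 2 (barrier δ A T t) := by
  show ContDiff ℝ 2 fun p => barrier δ A T t p
  unfold barrier; fun_prop

theorem abs_deriv_barrier_space_le (hδ : 0 ≤ δ) :
    |deriv (barrier δ A T t) p| ≤ barrier δ A T t p := by
  rw [deriv_barrier_space, abs_mul, abs_of_nonneg (by positivity), abs_sinh, barrier, ← cosh_abs p]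
  gcongr
  exact (sinh_lt_cosh _).le

end barrier

theorem false_of_isMaxOn_sub_barrier {σ c M A δ T t₀ p₀ b : ℝ} {v : ℝ → ℝ → ℝ}
    (hA : σ ^ 2 / 2 + |c| * M < A) (hδ : 0 < δ) (hb : t₀ < b)
    (hvt : DifferentiableAt ℝ (fun s => v s p₀) t₀) (hvp : ContDiff ℝ 2 (fun p => v t₀ p))
    (hM : |deriv (fun q => v t₀ q) p₀| ≤ M)
    (hpde : 0 = deriv (fun s => v s p₀) t₀
        + (1 / 2) * σ ^ 2 * deriv (deriv (fun q => v t₀ q)) p₀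
        + c * (deriv (fun q => v t₀ q) p₀) ^ 2)
    (hspace : IsLocalMax (fun q => v t₀ q - barrier δ A T t₀ q) p₀)
    (htime : IsMaxOn (fun s => v s p₀ - barrier δ A T s p₀) (Icc t₀ b) t₀) : False := by
  set C := barrier δ A T t₀ p₀
  have hC : 0 < C := barrier_pos hδ
  have hvt_le : deriv (fun s => v s p₀) t₀ ≤ -A * C := by
    have hφ := hasDerivAt_barrier_time (δ := δ) (A := A) (T := T) (t := t₀) (p := p₀)
    simpa [hφ.deriv] using htime.deriv_le_of_sub_Icc hb hvt hφ.differentiableAt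
  have hvpp_le : deriv (deriv (fun q => v t₀ q)) p₀ ≤ C := by
    simpa [deriv_deriv_barrier_space] using
      hspace.deriv_deriv_le_of_sub hvp contDiff_barrier_space
  have hvp_le : |deriv (fun q => v t₀ q) p₀| ≤ C := by
    rw [hspace.deriv_eq_of_sub (hvp.differentiable two_ne_zero p₀)
      (contDiff_barrier_space.differentiable two_ne_zero p₀)]
    exact abs_deriv_barrier_space_le hδ.le
  have hquad : c * (deriv (fun q => v t₀ q) p₀) ^ 2 ≤ |c| * M * C := by
    set x := deriv (fun q => v t₀ q) p₀
    have hM₀ : 0 ≤ M := (abs_nonneg x).trans hM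
    calc c * x ^ 2 ≤ |c| * (|x| * |x|) := by
          rw [abs_mul_abs_self x, ← sq]; gcongr; exact le_abs_self c
      _ ≤ |c| * (M * C) := by gcongr
      _ = |c| * M * C := by ring
  nlinarith [sq_nonneg σ]

theorem le_barrier_of_pde {σ c B M A δ T : ℝ} {v : ℝ → ℝ → ℝ}
    (hcont : ContinuousOn (fun q : ℝ × ℝ => v q.1 q.2) (Icc 0 T ×ˢ univ))
    (hB : ∀ t ∈ Icc 0 T, ∀ p, v t p ≤ B)
    (hvt : ∀ p, ∀ t ∈ Ico 0 T, DifferentiableAt ℝ (fun s => v s p) t)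
    (hvp : ∀ t ∈ Icc 0 T, ContDiff ℝ 2 (fun p => v t p))
    (hM : ∀ t ∈ Icc 0 T, ∀ p, |deriv (fun q => v t q) p| ≤ M)
    (hpde : ∀ t ∈ Ico 0 T, ∀ p, 0 = deriv (fun s => v s p) t
        + (1 / 2) * σ ^ 2 * deriv (deriv (fun q => v t q)) p
        + c * (deriv (fun q => v t q) p) ^ 2)
    (hterm : ∀ p, v T p = 0) (hA : σ ^ 2 / 2 + |c| * M < A) (hδ : 0 < δ) :
    ∀ t ∈ Icc 0 T, ∀ p, v t p ≤ barrier δ A T t p := by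
  intro t₁ ht₁ p₁
  have hA₀ : 0 ≤ A := by
    nlinarith [(abs_nonneg _).trans (hM t₁ ht₁ p₁), abs_nonneg c, sq_nonneg σ]
  obtain ⟨R, hR, hp₁R⟩ : ∃ R, B - (v t₁ p₁ - barrier δ A T t₁ p₁) < δ * cosh R ∧ |p₁| ≤ R :=
    (((tendsto_cosh_atTop.const_mul_atTop hδ).eventually_gt_atTop _).and
      (eventually_ge_atTop _)).exists
  set W : ℝ × ℝ → ℝ := fun q => v q.1 q.2 - barrier δ A T q.1 q.2
  have hK₁ : (t₁, p₁) ∈ Icc 0 T ×ˢ Icc (-R) R := ⟨ht₁, abs_le.1 hp₁R⟩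
  have hcont_barrier : Continuous fun q : ℝ × ℝ => barrier δ A T q.1 q.2 := by
    unfold barrier; fun_prop
  obtain ⟨⟨t₀, p₀⟩, ⟨ht₀, hp₀⟩, hmax⟩ :=
    (isCompact_Icc.prod isCompact_Icc).exists_isMaxOn ⟨_, hK₁⟩
      ((hcont.mono (prod_mono subset_rfl (subset_univ _))).sub hcont_barrier.continuousOn)
  have hW : W (t₁, p₁) ≤ W (t₀, p₀) := hmax hK₁
  have hp₀R : |p₀| < R := by
    by_contra! hRp₀
    have := mul_cosh_le_barrier (p := p₀) hδ.le hA₀ ht₀.2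
    have := cosh_le_cosh.2 ((abs_of_nonneg ((abs_nonneg p₁).trans hp₁R)).le.trans hRp₀)
    nlinarith [hB t₀ ht₀ p₀]
  have ht₀T : t₀ = T := by
    by_contra hne
    have ht₀T : t₀ < T := ht₀.2.lt_of_ne hne
    refine false_of_isMaxOn_sub_barrier (T := T) hA hδ ht₀T (hvt p₀ t₀ ⟨ht₀.1, ht₀T⟩)
      (hvp t₀ ht₀) (hM t₀ ht₀ p₀) (hpde t₀ ⟨ht₀.1, ht₀T⟩ p₀) ?_
      fun s hs => hmax (show (s, p₀) ∈ _ from ⟨⟨ht₀.1.trans hs.1, hs.2⟩, hp₀⟩)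
    filter_upwards [Ioo_mem_nhds (abs_lt.1 hp₀R).1 (abs_lt.1 hp₀R).2] with p hp
    exact hmax (show (t₀, p) ∈ _ from ⟨ht₀, Ioo_subset_Icc_self hp⟩)
  subst ht₀T
  have : W (t₀, p₀) ≤ 0 := by
    simp only [W, hterm, zero_sub, neg_nonpos]; exact (barrier_pos hδ).le
  linarith

theorem nonpos_of_pde {σ c B M T : ℝ} {v : ℝ → ℝ → ℝ}
    (hcont : ContinuousOn (fun q : ℝ × ℝ => v q.1 q.2) (Icc 0 T ×ˢ univ))
    (hB : ∀ t ∈ Icc 0 T, ∀ p, v t p ≤ B)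
    (hvt : ∀ p, ∀ t ∈ Ico 0 T, DifferentiableAt ℝ (fun s => v s p) t)
    (hvp : ∀ t ∈ Icc 0 T, ContDiff ℝ 2 (fun p => v t p))
    (hM : ∀ t ∈ Icc 0 T, ∀ p, |deriv (fun q => v t q) p| ≤ M)
    (hpde : ∀ t ∈ Ico 0 T, ∀ p, 0 = deriv (fun s => v s p) t
        + (1 / 2) * σ ^ 2 * deriv (deriv (fun q => v t q)) p
        + c * (deriv (fun q => v t q) p) ^ 2)
    (hterm : ∀ p, v T p = 0) :
    ∀ t ∈ Icc 0 T, ∀ p, v t p ≤ 0 := by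
  intro t ht p
  set A := σ ^ 2 / 2 + |c| * M + 1
  have hlim : Tendsto (fun δ => barrier δ A T t p) (𝓝[>] 0) (𝓝 0) := by
    have : Continuous fun δ => barrier δ A T t p := by unfold barrier; fun_prop
    simpa [barrier] using (this.tendsto 0).mono_left nhdsWithin_le_nhds
  exact ge_of_tendsto hlim <| eventually_nhdsWithin_of_forall fun δ hδ =>
    le_barrier_of_pde hcont hB hvt hvp hM hpde hterm (lt_add_one _) hδ t ht p

theorem nonneg_of_pde {σ c B M T : ℝ} {v : ℝ → ℝ → ℝ}
    (hcont : ContinuousOn (fun q : ℝ × ℝ => v q.1 q.2) (Icc 0 T ×ˢ univ))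
    (hB : ∀ t ∈ Icc 0 T, ∀ p, B ≤ v t p)
    (hvt : ∀ p, ∀ t ∈ Ico 0 T, DifferentiableAt ℝ (fun s => v s p) t)
    (hvp : ∀ t ∈ Icc 0 T, ContDiff ℝ 2 (fun p => v t p))
    (hM : ∀ t ∈ Icc 0 T, ∀ p, |deriv (fun q => v t q) p| ≤ M)
    (hpde : ∀ t ∈ Ico 0 T, ∀ p, 0 = deriv (fun s => v s p) t
        + (1 / 2) * σ ^ 2 * deriv (deriv (fun q => v t q)) p
        + c * (deriv (fun q => v t q) p) ^ 2)
    (hterm : ∀ p, v T p = 0) :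
    ∀ t ∈ Icc 0 T, ∀ p, 0 ≤ v t p := by
  have := nonpos_of_pde (σ := σ) (c := -c) (B := -B) (M := M) (v := fun t p => -v t p)
    hcont.neg (fun t ht p => neg_le_neg (hB t ht p)) (fun p t ht => (hvt p t ht).neg)
    (fun t ht => (hvp t ht).neg) (by simpa using hM)
    (fun t ht p => by
      simp only [deriv.fun_neg, deriv.fun_neg', neg_sq]; linarith [hpde t ht p])
    (by simpa using hterm)
  simpa using this

theorem stmt_14_general (σ T c : ℝ)
    (v : ℝ → ℝ → ℝ)
    (hcont : ContinuousOn (fun q : ℝ × ℝ => v q.1 q.2)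
      (Set.Icc (0 : ℝ) T ×ˢ Set.univ))
    (hb : ∃ M, ∀ t ∈ Set.Icc (0 : ℝ) T, ∀ p : ℝ, |v t p| ≤ M)
    (hvt : ∀ p : ℝ, ∀ t ∈ Set.Ico (0 : ℝ) T,
      DifferentiableAt ℝ (fun s => v s p) t)
    (hvp : ∀ t ∈ Set.Icc (0 : ℝ) T, ContDiff ℝ 2 (fun p => v t p))
    (hbp : ∃ M, ∀ t ∈ Set.Icc (0 : ℝ) T, ∀ p : ℝ,
      |deriv (fun q => v t q) p| ≤ M)
    (hpde : ∀ t ∈ Set.Ico (0 : ℝ) T, ∀ p : ℝ,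
      0 = deriv (fun s => v s p) t
        + (1 / 2) * σ ^ 2 * deriv (deriv (fun q => v t q)) p
        + c * (deriv (fun q => v t q) p) ^ 2)
    (hterm : ∀ p : ℝ, v T p = 0) :
    (∀ t ∈ Set.Icc (0 : ℝ) T, ∀ p : ℝ, v t p = 0) ∧
    (∀ (N : ℕ) (κ lam : ℝ), ∀ t ∈ Set.Icc (0 : ℝ) T, ∀ p : ℝ,
      (lam / (κ * ((N : ℝ) + 1))) * deriv (fun q => v t q) p = 0) := by
  obtain ⟨B, hB⟩ := hb
  obtain ⟨M, hM⟩ := hbp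
  have hzero : ∀ t ∈ Set.Icc (0 : ℝ) T, ∀ p : ℝ, v t p = 0 := fun t ht p =>
    le_antisymm
      (nonpos_of_pde hcont (fun t ht p => (abs_le.1 (hB t ht p)).2) hvt hvp hM hpde hterm t ht p)
      (nonneg_of_pde hcont (fun t ht p => (abs_le.1 (hB t ht p)).1) hvt hvp hM hpde hterm t ht p)
  refine ⟨hzero, fun N κ lam t ht p => ?_⟩
  rw [show (fun q => v t q) = fun _ => 0 from funext (hzero t ht), deriv_const, mul_zero]

/-- Uniqueness for the Burgers-type equation with zero terminal condition: a
bounded `C^{1,2}` solution of `0 = v_t + ½σ²v_pp + c v_p²` on `[0,T) × ℝ` with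
bounded `p`-derivative and `v(T,·) = 0` vanishes identically. Consequently, in
a zero-sum risk-neutral game with linear costs the aggregate equilibrium
trading speed `(λ/(κ(N+1))) v_p` vanishes identically. -/
theorem stmt_14 (σ T c : ℝ) (hσ : 0 < σ) (hT : 0 < T)
    (v : ℝ → ℝ → ℝ)
    (hcont : ContinuousOn (fun q : ℝ × ℝ => v q.1 q.2)
      (Set.Icc (0 : ℝ) T ×ˢ Set.univ))
    (hb : ∃ M, ∀ t ∈ Set.Icc (0 : ℝ) T, ∀ p : ℝ, |v t p| ≤ M)
    (hvt : ∀ p : ℝ, ∀ t ∈ Set.Ico (0 : ℝ) T,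
      DifferentiableAt ℝ (fun s => v s p) t)
    (hvp : ∀ t ∈ Set.Icc (0 : ℝ) T, ContDiff ℝ 2 (fun p => v t p))
    (hbp : ∃ M, ∀ t ∈ Set.Icc (0 : ℝ) T, ∀ p : ℝ,
      |deriv (fun q => v t q) p| ≤ M)
    (hpde : ∀ t ∈ Set.Ico (0 : ℝ) T, ∀ p : ℝ,
      0 = deriv (fun s => v s p) t
        + (1 / 2) * σ ^ 2 * deriv (deriv (fun q => v t q)) p
        + c * (deriv (fun q => v t q) p) ^ 2)
    (hterm : ∀ p : ℝ, v T p = 0) :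
    (∀ t ∈ Set.Icc (0 : ℝ) T, ∀ p : ℝ, v t p = 0) ∧
    (∀ (N : ℕ) (κ lam : ℝ), ∀ t ∈ Set.Icc (0 : ℝ) T, ∀ p : ℝ,
      (lam / (κ * ((N : ℝ) + 1))) * deriv (fun q => v t q) p = 0) :=
  stmt_14_general σ T c v hcont hb hvt hvp hbp hpde hterm
end

section
/- Let A > 0, B ≠ 0, T > 0, L ≥ 0, and let G: ℝ → ℝ be Lipschitz continuous with constant L (and such that exp((B/A)G(p + ·)) is γ-integrable, which holds automatically since G has at most linear growth). Define v(t, p) = (A/B) · log ∫_ℝ exp( (B/A) · G( p + √(A(T − t)) z ) ) dγ(z) for (t, p) ∈ [0, T) × ℝ, where γ is the standard Gaussian measure on ℝ. Then for every t ∈ [0, T) the function p ↦ v(t, p) is Lipschitz continuous with constant L; in particular |∂_p v(t, p)| ≤ L wherever the derivative exists. -/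
/-!
Shifting `p` by `h` changes the exponent `c * G (p + s z)` by at most `|c| L |h|` for every `z`,
so the Gaussian integral changes by at most a factor `exp (|c| L |h|)`; after taking `c⁻¹ * log`
this is a change of at most `L |h|`. The integrals are finite because a Lipschitz exponent grows
at most linearly and the Gaussian has exponential moments of every order.
-/

open MeasureTheory ProbabilityTheory Real

theorem integrable_exp_gaussianReal_of_lipschitzWith {f : ℝ → ℝ} {K : NNReal}
    (hf : LipschitzWith K f) (μ : ℝ) (v : NNReal) :
    Integrable (fun x => exp (f x)) (gaussianReal μ v) := by
  have hbound : Integrable (fun x => exp (f 0) * exp (K * |x|)) (gaussianReal μ v) :=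
    (integrable_exp_mul_abs (integrable_exp_mul_gaussianReal _)
      (integrable_exp_mul_gaussianReal _)).const_mul _
  refine hbound.mono' (continuous_exp.comp hf.continuous).aestronglyMeasurable
    (ae_of_all _ fun x => ?_)
  rw [norm_of_nonneg (exp_pos _).le, ← exp_add, exp_le_exp]
  simpa [Real.dist_eq] using hf.le_add_mul x 0

theorem lipschitzWith_log_integral_exp {X Ω : Type*} [PseudoMetricSpace X] [MeasurableSpace Ω]
    {μ : Measure Ω} [NeZero μ] {F : X → Ω → ℝ} {K : NNReal}
    (hF : ∀ ω, LipschitzWith K (F · ω)) (hint : ∀ x, Integrable (fun ω => exp (F x ω)) μ) :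
    LipschitzWith K (fun x => log (∫ ω, exp (F x ω) ∂μ)) := by
  refine LipschitzWith.of_le_add_mul K fun x y => ?_
  have hmono : ∫ ω, exp (F x ω) ∂μ ≤ exp (K * dist x y) * ∫ ω, exp (F y ω) ∂μ := by
    rw [← integral_const_mul]
    refine integral_mono (hint x) ((hint y).const_mul _) fun ω => ?_
    rw [← exp_add, exp_le_exp, add_comm]
    exact (hF ω).le_add_mul x y
  calc log (∫ ω, exp (F x ω) ∂μ)
      ≤ log (exp (K * dist x y) * ∫ ω, exp (F y ω) ∂μ) :=
        log_le_log (integral_exp_pos (hint x)) hmono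
    _ = log (∫ ω, exp (F y ω) ∂μ) + K * dist x y := by
        rw [log_mul (exp_pos _).ne' (integral_exp_pos (hint y)).ne', log_exp, add_comm]

theorem LipschitzWith.inv_mul_log_integral_exp_gaussianReal {G : ℝ → ℝ} {K : NNReal}
    (hG : LipschitzWith K G) {c : ℝ} (hc : c ≠ 0) (s μ : ℝ) (v : NNReal) :
    LipschitzWith K fun p => c⁻¹ * log (∫ z, exp (c * G (p + s * z)) ∂gaussianReal μ v) := by
  have hshift : ∀ z, LipschitzWith (‖c‖₊ * K) fun p => c * G (p + s * z) := fun z => by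
    have h := (lipschitzWith_smul c).comp (hG.comp (isometry_add_right (s * z)).lipschitz)
    rwa [mul_one] at h
  have hscale : ∀ p, LipschitzWith (‖c‖₊ * (K * ‖s‖₊)) fun z => c * G (p + s * z) := fun p => by
    have h := (lipschitzWith_smul c).comp
      (hG.comp ((isometry_add_left p).lipschitz.comp (lipschitzWith_smul s)))
    rwa [one_mul] at h
  have hlog := lipschitzWith_log_integral_exp (μ := gaussianReal μ v) hshift
    fun p => integrable_exp_gaussianReal_of_lipschitzWith (hscale p) μ v
  have hconst : ‖c⁻¹‖₊ * (‖c‖₊ * K) = K := by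
    rw [nnnorm_inv, inv_mul_cancel_left₀ (nnnorm_ne_zero_iff.2 hc)]
  rw [← hconst]
  exact (lipschitzWith_smul c⁻¹).comp hlog

theorem stmt_15_general (A B T L : ℝ) (hA : 0 < A) (hB : B ≠ 0)
    (hL : 0 ≤ L)
    (G : ℝ → ℝ) (hG : LipschitzWith L.toNNReal G)
    (v : ℝ → ℝ → ℝ)
    (hv : ∀ t p, v t p = (A / B) * Real.log
      (∫ z, Real.exp ((B / A) * G (p + Real.sqrt (A * (T - t)) * z))
        ∂(gaussianReal 0 1))) :
    (∀ t ∈ Set.Ico (0 : ℝ) T, LipschitzWith L.toNNReal (fun p => v t p)) ∧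
    (∀ t ∈ Set.Ico (0 : ℝ) T, ∀ p : ℝ,
      DifferentiableAt ℝ (fun q => v t q) p →
        |deriv (fun q => v t q) p| ≤ L) := by
  have hlip : ∀ t ∈ Set.Ico (0 : ℝ) T, LipschitzWith L.toNNReal (fun p => v t p) := by
    intro t _
    have h := hG.inv_mul_log_integral_exp_gaussianReal (div_ne_zero hB hA.ne') √(A * (T - t)) 0 1
    rwa [inv_div, ← funext (hv t)] at h
  refine ⟨hlip, fun t ht p _ => ?_⟩
  simpa [hL] using norm_deriv_le_of_lipschitz (x₀ := p) (hlip t ht)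

/-- Gradient bound for the Cole–Hopf solution: if `G` is `L`-Lipschitz, then
for every `t ∈ [0,T)` the function
`p ↦ (A/B) log ∫ exp((B/A) G(p + √(A(T−t)) z)) dγ(z)` is `L`-Lipschitz; in
particular `|∂ₚ v(t,p)| ≤ L` wherever the derivative exists. -/
theorem stmt_15 (A B T L : ℝ) (hA : 0 < A) (hB : B ≠ 0) (hT : 0 < T)
    (hL : 0 ≤ L)
    (G : ℝ → ℝ) (hG : LipschitzWith L.toNNReal G)
    (v : ℝ → ℝ → ℝ)
    (hv : ∀ t p, v t p = (A / B) * Real.log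
      (∫ z, Real.exp ((B / A) * G (p + Real.sqrt (A * (T - t)) * z))
        ∂(gaussianReal 0 1))) :
    (∀ t ∈ Set.Ico (0 : ℝ) T, LipschitzWith L.toNNReal (fun p => v t p)) ∧
    (∀ t ∈ Set.Ico (0 : ℝ) T, ∀ p : ℝ,
      DifferentiableAt ℝ (fun q => v t q) p →
        |deriv (fun q => v t q) p| ≤ L) :=
  stmt_15_general A B T L hA hB hL G hG v hv
end

section
/- Let σ, λ, κ, T > 0 and let H: ℝ → ℝ be Lipschitz continuous with constant L and continuously differentiable. For each integer N ≥ 1 set B_N := 2λ²N/(κ(N+1)²), define v^{(N)}(t, p) = (σ²/B_N) · log ∫_ℝ exp( (B_N/σ²) · H( p + σ√(T − t) z ) ) dγ(z) on [0,T) × ℝ with γ the standard Gaussian measure, and define the aggregate equilibrium trading speed Ẋ*_N(t, p) := (λ/(κ(N+1))) · ∂_p v^{(N)}(t, p). Then for all (t, p) ∈ [0, T) × ℝ and all N: |Ẋ*_N(t, p)| ≤ λL/(κ(N+1)), and in particular Ẋ*_N(t, p) → 0 as N → ∞, uniformly in (t, p). -/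
open MeasureTheory ProbabilityTheory Real Filter Topology

/-!
The Cole–Hopf transform `p ↦ a⁻¹ log ∫ exp (a H (p + φ z)) dμ(z)` is a soft maximum of
translates of `H`: moving `H` pointwise by at most `d` moves it by at most `d`, for every `a`.
Hence `v⁽ᴺ⁾(t, ·)` inherits the Lipschitz constant `L` of `H`, so
`|∂ₚ v⁽ᴺ⁾| ≤ L`, and the prefactor `λ/(κ(N+1))` gives the bound, which tends to `0`.
-/

lemma mul_le_abs_mul_of_abs_le {a x b : ℝ} (h : |x| ≤ b) : a * x ≤ |a| * b :=
  (le_abs_self _).trans ((abs_mul a x).trans_le (mul_le_mul_of_nonneg_left h (abs_nonneg a)))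

lemma log_integral_exp_le_log_integral_exp_add {α : Type*} [MeasurableSpace α] {μ : Measure α}
    [NeZero μ] {f g : α → ℝ} {d : ℝ} (hf : Integrable (fun x => exp (f x)) μ)
    (hg : Integrable (fun x => exp (g x)) μ) (hfg : ∀ x, f x ≤ g x + d) :
    log (∫ x, exp (f x) ∂μ) ≤ log (∫ x, exp (g x) ∂μ) + d := by
  have hle : ∫ x, exp (f x) ∂μ ≤ exp d * ∫ x, exp (g x) ∂μ := by
    rw [← integral_const_mul]
    refine integral_mono hf (hg.const_mul _) fun x => ?_
    rw [← exp_add]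
    exact exp_le_exp.2 (by linarith [hfg x])
  calc log (∫ x, exp (f x) ∂μ) ≤ log (exp d * ∫ x, exp (g x) ∂μ) :=
        log_le_log (integral_exp_pos hf) hle
    _ = log (∫ x, exp (g x) ∂μ) + d := by
        rw [log_mul (exp_pos d).ne' (integral_exp_pos hg).ne', log_exp, add_comm]

lemma lipschitzWith_inv_mul_log_integral_exp_comp_add {α E : Type*} [MeasurableSpace α]
    [SeminormedAddCommGroup E] {μ : Measure α} [NeZero μ] {H : E → ℝ} {K : NNReal}
    (hH : LipschitzWith K H) (a : ℝ) (φ : α → E)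
    (hint : ∀ p, Integrable (fun x => exp (a * H (p + φ x))) μ) :
    LipschitzWith K (fun p => a⁻¹ * log (∫ x, exp (a * H (p + φ x)) ∂μ)) := by
  have hshift : ∀ p q, log (∫ x, exp (a * H (p + φ x)) ∂μ)
      ≤ log (∫ x, exp (a * H (q + φ x)) ∂μ) + |a| * (K * dist p q) := by
    intro p q
    refine log_integral_exp_le_log_integral_exp_add (hint p) (hint q) fun x => ?_
    have hdist : dist (H (p + φ x)) (H (q + φ x)) ≤ K * dist p q := by
      simpa only [dist_add_right] using hH.dist_le_mul (p + φ x) (q + φ x)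
    calc a * H (p + φ x) = a * H (q + φ x) + a * (H (p + φ x) - H (q + φ x)) := by ring
      _ ≤ a * H (q + φ x) + |a| * (K * dist p q) := by
        rw [dist_eq] at hdist
        exact add_le_add_right (mul_le_abs_mul_of_abs_le hdist) _
  refine LipschitzWith.of_dist_le_mul fun p q => ?_
  rw [dist_eq, ← mul_sub, abs_mul, abs_inv]
  rcases eq_or_ne a 0 with rfl | ha
  · simp only [abs_zero, inv_zero, zero_mul]; positivity
  · rw [inv_mul_le_iff₀ (abs_pos.2 ha)]
    exact abs_sub_le_iff.2 ⟨by linarith [hshift p q], by linarith [dist_comm q p ▸ hshift q p]⟩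

lemma integrable_exp_mul_comp_add_mul_gaussianReal {H : ℝ → ℝ} {K : NNReal}
    (hH : LipschitzWith K H) (m : ℝ) (v : NNReal) (a p c : ℝ) :
    Integrable (fun z => exp (a * H (p + c * z))) (gaussianReal m v) := by
  have hmaj := (integrable_exp_mul_abs
    (integrable_exp_mul_gaussianReal (μ := m) (v := v) (|a| * K * |c|))
    (integrable_exp_mul_gaussianReal _)).const_mul (exp (a * H p))
  refine hmaj.mono' (by have := hH.continuous; fun_prop) (ae_of_all _ fun z => ?_)
  have hdist : |H (p + c * z) - H p| ≤ K * (|c| * |z|) := by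
    simpa only [dist_eq, add_sub_cancel_left, abs_mul] using hH.dist_le_mul (p + c * z) p
  rw [norm_of_nonneg (exp_pos _).le, ← exp_add]
  gcongr
  calc a * H (p + c * z) = a * H p + a * (H (p + c * z) - H p) := by ring
    _ ≤ a * H p + |a| * (K * (|c| * |z|)) :=
        add_le_add_right (mul_le_abs_mul_of_abs_le hdist) _
    _ = a * H p + |a| * K * |c| * |z| := by ring

theorem stmt_16_general (σ lam κ T L : ℝ) (hlam : 0 < lam) (hκ : 0 < κ)
    (hL : 0 ≤ L)
    (H : ℝ → ℝ) (hHL : LipschitzWith L.toNNReal H)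
    (B : ℕ → ℝ)
    (v : ℕ → ℝ → ℝ → ℝ)
    (hv : ∀ N : ℕ, 1 ≤ N → ∀ t p : ℝ, v N t p =
      (σ ^ 2 / B N) * Real.log
        (∫ z, Real.exp ((B N / σ ^ 2) * H (p + σ * Real.sqrt (T - t) * z))
          ∂(gaussianReal 0 1)))
    (Xdot : ℕ → ℝ → ℝ → ℝ)
    (hX : ∀ (N : ℕ) (t p : ℝ),
      Xdot N t p = (lam / (κ * ((N : ℝ) + 1))) * deriv (fun q => v N t q) p) :
    (∀ N : ℕ, 1 ≤ N → ∀ t ∈ Set.Ico (0 : ℝ) T, ∀ p : ℝ,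
      |Xdot N t p| ≤ lam * L / (κ * ((N : ℝ) + 1))) ∧
    (∀ ε > (0 : ℝ), ∃ N₀ : ℕ, 1 ≤ N₀ ∧ ∀ N ≥ N₀,
      ∀ t ∈ Set.Ico (0 : ℝ) T, ∀ p : ℝ, |Xdot N t p| ≤ ε) := by
  have bound : ∀ N : ℕ, 1 ≤ N → ∀ t p : ℝ, |Xdot N t p| ≤ lam * L / (κ * ((N : ℝ) + 1)) := by
    intro N hN t p
    have hlip : LipschitzWith L.toNNReal (fun q => v N t q) := by
      have := lipschitzWith_inv_mul_log_integral_exp_comp_add hHL (B N / σ ^ 2)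
        (fun z => σ * √(T - t) * z)
        fun q => integrable_exp_mul_comp_add_mul_gaussianReal hHL 0 1 _ _ _
      simpa only [funext (hv N hN t), inv_div] using this
    have hderiv : |deriv (fun q => v N t q) p| ≤ L := by
      simpa only [Real.coe_toNNReal _ hL, Real.norm_eq_abs] using norm_deriv_le_of_lipschitz hlip
    rw [hX, abs_mul, abs_of_nonneg (by positivity), div_mul_eq_mul_div]
    gcongr
  have hlim : Tendsto (fun N : ℕ => lam * L / (κ * ((N : ℝ) + 1))) atTop (𝓝 0) :=
    tendsto_const_nhds.div_atTop <| (tendsto_atTop_add_const_right _ 1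
      tendsto_natCast_atTop_atTop).const_mul_atTop hκ
  refine ⟨fun N hN t _ p => bound N hN t p, fun ε hε => ?_⟩
  obtain ⟨N₀, hN₀⟩ := eventually_atTop.1 (hlim.eventually (ge_mem_nhds hε))
  refine ⟨max 1 N₀, le_max_left _ _, fun N hN t _ p => ?_⟩
  exact (bound N (le_of_max_le_left hN) t p).trans (hN₀ N (le_of_max_le_right hN))

/-- The more informed competitors, the less aggregate manipulation: with
`B_N = 2λ²N/(κ(N+1)²)`, the Cole–Hopf aggregate value function `v⁽ᴺ⁾` of the
game where one player holds the `L`-Lipschitz option `H` yields an aggregate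
equilibrium trading speed `Ẋ*_N = (λ/(κ(N+1))) ∂ₚ v⁽ᴺ⁾` satisfying
`|Ẋ*_N| ≤ λL/(κ(N+1))`, which tends to `0` as `N → ∞`, uniformly in `(t,p)`. -/
theorem stmt_16 (σ lam κ T L : ℝ) (hσ : 0 < σ) (hlam : 0 < lam) (hκ : 0 < κ)
    (hT : 0 < T) (hL : 0 ≤ L)
    (H : ℝ → ℝ) (hH : ContDiff ℝ 1 H) (hHL : LipschitzWith L.toNNReal H)
    (B : ℕ → ℝ) (hB : ∀ N : ℕ, B N = 2 * lam ^ 2 * N / (κ * ((N : ℝ) + 1) ^ 2))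
    (v : ℕ → ℝ → ℝ → ℝ)
    (hv : ∀ N : ℕ, 1 ≤ N → ∀ t p : ℝ, v N t p =
      (σ ^ 2 / B N) * Real.log
        (∫ z, Real.exp ((B N / σ ^ 2) * H (p + σ * Real.sqrt (T - t) * z))
          ∂(gaussianReal 0 1)))
    (Xdot : ℕ → ℝ → ℝ → ℝ)
    (hX : ∀ (N : ℕ) (t p : ℝ),
      Xdot N t p = (lam / (κ * ((N : ℝ) + 1))) * deriv (fun q => v N t q) p) :
    (∀ N : ℕ, 1 ≤ N → ∀ t ∈ Set.Ico (0 : ℝ) T, ∀ p : ℝ,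
      |Xdot N t p| ≤ lam * L / (κ * ((N : ℝ) + 1))) ∧
    (∀ ε > (0 : ℝ), ∃ N₀ : ℕ, 1 ≤ N₀ ∧ ∀ N ≥ N₀,
      ∀ t ∈ Set.Ico (0 : ℝ) T, ∀ p : ℝ, |Xdot N t p| ≤ ε) :=
  stmt_16_general σ lam κ T L hlam hκ hL H hHL B v hv Xdot hX
end

section
/- Let (Ω, 𝓕, (𝓕_t)_{t∈[0,T]}, ℙ) be a filtered probability space and let W = (W_t) be a square-integrable martingale with W_0 = 0. Let T, λ, κ, Θ > 0 and p₀, K ∈ ℝ. Let X: Ω × [0,T] → ℝ be adapted and pathwise absolutely continuous with X_0 = 0 and bounded derivative Ẋ, and let θ: Ω → [0, Θ] be 𝓕_T-measurable. Define P_t = p₀ + W_t + λ X_t and J(X, θ) = −∫₀ᵀ Ẋ_t (P_t + κ Ẋ_t) dt + (X_T + θ)( P_T − (1/2)λ(X_T + θ) ) − θ K. Then 𝔼[J(X, θ)] = −κ 𝔼[∫₀ᵀ Ẋ_t² dt] + 𝔼[ θ( p₀ + W_T − (1/2)λθ − K ) ], and consequently 𝔼[J(X, θ)] ≤ 𝔼[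 max_{ϑ ∈ [0, Θ]} ϑ( p₀ + W_T − (1/2)λϑ − K ) ], with equality attained by taking Ẋ ≡ 0 and θ the pointwise maximizer. In particular the optimal trading strategy in the underlying is X ≡ 0: call options with physical delivery induce no stock price manipulation. -/
/-!
Pathwise, `∫₀ᵀ Ẋ · λX dt = λX_T²/2` cancels against the liquidation term, leaving
`J = −κ∫₀ᵀ Ẋ² dt + θ(p₀ + W_T − ½λθ − K) + (X_T W_T − ∫₀ᵀ Ẋ_t W_t dt)`.
The last term has zero mean: by Fubini and the martingale property `𝔼[Ẋ_t W_T] = 𝔼[Ẋ_t W_t]`,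
once `Ẋ` is replaced by an adapted version, obtained from the left difference quotients of the
adapted `X` (they converge to `Ẋ` a.e. by Lebesgue differentiation). Hence
`𝔼[J] ≤ 𝔼[θ(p₀ + W_T − ½λθ − K)]`, and the concave quadratic in `θ` is maximised on `[0, Θ]` at
the projection of `(p₀ + W_T − K)/λ`.
-/

open MeasureTheory Set Filter Function
open scoped Topology

lemma intervalIntegrable_of_abs_le {f : ℝ → ℝ} (hf : Measurable f) {C : ℝ}
    (hC : ∀ t, |f t| ≤ C) (a b : ℝ) : IntervalIntegrable f volume a b :=
  intervalIntegrable_const.mono_fun' hf.aestronglyMeasurable (ae_of_all _ hC)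

theorem IntervalIntegrable.integral_primitive_mul {f : ℝ → ℝ} {a b : ℝ}
    (hf : IntervalIntegrable f volume a b) :
    ∫ t in a..b, (∫ s in a..t, f s) * f t = (∫ t in a..b, f t) ^ 2 / 2 := by
  set F : ℝ → ℝ := fun x => ∫ s in a..x, f s with hFdef
  have hF : AbsolutelyContinuousOnInterval F a b :=
    hf.absolutelyContinuousOnInterval_intervalIntegral left_mem_uIcc
  have hderiv : ∀ᵐ t, t ∈ uIoc a b → deriv F t = f t := by
    filter_upwards [hf.ae_hasDerivAt_integral] with t ht hmem
    exact (ht (uIoc_subset_uIcc hmem) a left_mem_uIcc).deriv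
  have hparts := hF.integral_mul_deriv_eq_deriv_mul hF
  have h1 : ∫ t in a..b, F t * deriv F t = ∫ t in a..b, F t * f t :=
    intervalIntegral.integral_congr_ae (hderiv.mono fun t ht hmem => by rw [ht hmem])
  have h2 : ∫ t in a..b, deriv F t * F t = ∫ t in a..b, F t * f t :=
    intervalIntegral.integral_congr_ae (hderiv.mono fun t ht hmem => by rw [ht hmem, mul_comm])
  rw [h1, h2] at hparts
  simp only [hFdef, intervalIntegral.integral_same] at hparts ⊢
  linarith

theorem payoff_decomposition {f w x : ℝ → ℝ} {T : ℝ} (hf : IntervalIntegrable f volume 0 T)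
    (hf2 : IntervalIntegrable (fun t => f t ^ 2) volume 0 T) (hw : Continuous w)
    (hx : ∀ t, x t = ∫ s in 0..t, f s) (p₀ lam κ θ K : ℝ) :
    -(∫ t in 0..T, f t * (p₀ + w t + lam * x t + κ * f t))
        + (x T + θ) * (p₀ + w T + lam * x T - 1 / 2 * lam * (x T + θ)) - θ * K
      = -κ * (∫ t in 0..T, f t ^ 2) + θ * (p₀ + w T - 1 / 2 * lam * θ - K)
        + (x T * w T - ∫ t in 0..T, f t * w t) := by
  have hfw : IntervalIntegrable (fun t => f t * w t) volume 0 T :=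
    hf.mul_continuousOn hw.continuousOn
  have hxf : IntervalIntegrable (fun t => x t * f t) volume 0 T := by
    simp only [hx]
    exact hf.continuousOn_mul
      (hf.absolutelyContinuousOnInterval_intervalIntegral left_mem_uIcc).continuousOn
  have hxT : ∫ t in 0..T, x t * f t = x T ^ 2 / 2 := by
    simp only [hx]
    exact hf.integral_primitive_mul
  have hsplit : ∫ t in 0..T, f t * (p₀ + w t + lam * x t + κ * f t)
      = p₀ * x T + (∫ t in 0..T, f t * w t) + lam * (x T ^ 2 / 2)
        + κ * (∫ t in 0..T, f t ^ 2) := by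
    calc ∫ t in 0..T, f t * (p₀ + w t + lam * x t + κ * f t)
        = ∫ t in 0..T, (p₀ * f t + f t * w t + lam * (x t * f t) + κ * f t ^ 2) := by
          congr 1 with t
          ring
      _ = _ := by
          rw [intervalIntegral.integral_add (((hf.const_mul _).add hfw).add (hxf.const_mul _))
              (hf2.const_mul _),
            intervalIntegral.integral_add ((hf.const_mul _).add hfw) (hxf.const_mul _),
            intervalIntegral.integral_add (hf.const_mul _) hfw,
            intervalIntegral.integral_const_mul, intervalIntegral.integral_const_mul,
            intervalIntegral.integral_const_mul, hxT, hx T]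
  rw [hsplit]
  ring

noncomputable def optimalExercise (lam Θ K S : ℝ) : ℝ := max 0 (min Θ ((S - K) / lam))

noncomputable def exerciseValue (lam Θ K S : ℝ) : ℝ :=
  sSup ((fun ϑ => ϑ * (S - 1 / 2 * lam * ϑ - K)) '' Icc 0 Θ)

section Exercise

variable {lam Θ K S : ℝ}

lemma optimalExercise_mem_Icc (hΘ : 0 ≤ Θ) : optimalExercise lam Θ K S ∈ Icc 0 Θ :=
  ⟨le_max_left _ _, max_le hΘ (min_le_left _ _)⟩

lemma optimalExercise_sub_mul_nonneg (hlam : 0 < lam) {ϑ : ℝ} (hϑ : ϑ ∈ Icc 0 Θ) :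
    0 ≤ (optimalExercise lam Θ K S - ϑ) * (S - K - lam * optimalExercise lam Θ K S) := by
  obtain ⟨h0, hΘ⟩ := hϑ
  unfold optimalExercise
  rcases le_total (S - K) 0 with hc | hc
  · rw [max_eq_left (min_le_of_right_le (div_nonpos_of_nonpos_of_nonneg hc hlam.le))]
    nlinarith
  rcases le_total Θ ((S - K) / lam) with hΘc | hΘc
  · rw [min_eq_left hΘc, max_eq_right (h0.trans hΘ)]
    rw [le_div_iff₀ hlam] at hΘc
    nlinarith
  · rw [min_eq_right hΘc, max_eq_right (div_nonneg hc hlam.le), mul_div_cancel₀ _ hlam.ne']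
    simp

lemma isGreatest_exerciseValue (hlam : 0 < lam) (hΘ : 0 ≤ Θ) :
    IsGreatest ((fun ϑ => ϑ * (S - 1 / 2 * lam * ϑ - K)) '' Icc 0 Θ)
      (optimalExercise lam Θ K S
        * (S - 1 / 2 * lam * optimalExercise lam Θ K S - K)) := by
  refine ⟨mem_image_of_mem _ (optimalExercise_mem_Icc hΘ), ?_⟩
  rintro _ ⟨ϑ, hϑ, rfl⟩
  -- for `q ϑ = ϑ(S - ½λϑ - K)` and the optimum `o`: `q o - q ϑ = (o - ϑ)(S - K - λo) + λ(o - ϑ)²/2`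
  nlinarith [optimalExercise_sub_mul_nonneg (K := K) (S := S) hlam hϑ,
    mul_nonneg hlam.le (sq_nonneg (optimalExercise lam Θ K S - ϑ))]

lemma exerciseValue_eq (hlam : 0 < lam) (hΘ : 0 ≤ Θ) :
    exerciseValue lam Θ K S
      = optimalExercise lam Θ K S * (S - 1 / 2 * lam * optimalExercise lam Θ K S - K) :=
  (isGreatest_exerciseValue hlam hΘ).csSup_eq

lemma le_exerciseValue (hlam : 0 < lam) {ϑ : ℝ} (hϑ : ϑ ∈ Icc 0 Θ) :
    ϑ * (S - 1 / 2 * lam * ϑ - K) ≤ exerciseValue lam Θ K S := by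
  rw [exerciseValue_eq hlam (hϑ.1.trans hϑ.2)]
  exact (isGreatest_exerciseValue hlam (hϑ.1.trans hϑ.2)).2 (mem_image_of_mem _ hϑ)

lemma continuous_exerciseValue (hlam : 0 < lam) (hΘ : 0 ≤ Θ) :
    Continuous (exerciseValue lam Θ K) := by
  rw [show exerciseValue lam Θ K = _ from funext fun S => exerciseValue_eq (S := S) hlam hΘ]
  unfold optimalExercise
  fun_prop

lemma abs_exerciseValue_le (hlam : 0 < lam) (hΘ : 0 ≤ Θ) :
    |exerciseValue lam Θ K S| ≤ Θ * |S - K| := by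
  have hnonneg : 0 ≤ exerciseValue lam Θ K S := by
    simpa using le_exerciseValue (K := K) (S := S) hlam ⟨le_rfl, hΘ⟩
  obtain ⟨h0, hm⟩ := optimalExercise_mem_Icc (lam := lam) (K := K) (S := S) hΘ
  rw [abs_of_nonneg hnonneg, exerciseValue_eq hlam hΘ]
  nlinarith [le_abs_self (S - K), neg_abs_le (S - K), abs_nonneg (S - K),
    mul_le_mul_of_nonneg_right hm (abs_nonneg (S - K)), mul_nonneg hlam.le (mul_nonneg h0 h0)]

end Exercise

noncomputable def limsupLeftSlope (x : ℝ → ℝ) (t : ℝ) : ℝ :=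
  limsup (fun n : ℕ => ((n : ℝ) + 1) * (x t - x (t - 1 / ((n : ℝ) + 1)))) atTop

lemma HasDerivAt.limsupLeftSlope_eq {x : ℝ → ℝ} {d t : ℝ} (h : HasDerivAt x d t) :
    limsupLeftSlope x t = d := by
  have hseq : Tendsto (fun n : ℕ => t - 1 / ((n : ℝ) + 1)) atTop (𝓝[≠] t) := by
    refine tendsto_nhdsWithin_of_tendsto_nhds_of_eventually_within _ ?_ ?_
    · simpa using (tendsto_const_nhds (x := t)).sub tendsto_one_div_add_atTop_nhds_zero_nat
    · filter_upwards with n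
      have : (0 : ℝ) < 1 / ((n : ℝ) + 1) := by positivity
      simp only [mem_compl_iff, mem_singleton_iff]
      linarith
  refine Tendsto.limsup_eq ((h.tendsto_slope.comp hseq).congr fun n => ?_)
  have : ((n : ℝ) + 1) ≠ 0 := by positivity
  simp only [comp_apply, slope_def_field]
  field_simp
  ring

section Measurability

variable {Ω : Type*} {X : Ω → ℝ → ℝ}

lemma measurable_limsupLeftSlope_of_le {m : MeasurableSpace Ω} {t : ℝ}
    (hX : ∀ s ≤ t, Measurable fun ω => X ω s) :
    Measurable fun ω => limsupLeftSlope (X ω) t := by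
  refine Measurable.limsup fun n => ((hX t le_rfl).sub (hX _ ?_)).const_mul _
  have : (0 : ℝ) < 1 / ((n : ℝ) + 1) := by positivity
  linarith

lemma Measurable.limsupLeftSlope [MeasurableSpace Ω] (hX : Measurable (uncurry X)) :
    Measurable (uncurry fun ω => limsupLeftSlope (X ω)) :=
  Measurable.limsup fun _ => (hX.sub (hX.comp
    (measurable_fst.prodMk (measurable_snd.sub measurable_const)))).const_mul _

end Measurability

section Modification

variable {Ω : Type*} {m : MeasurableSpace Ω}

theorem exists_adapted_modification_of_primitive {𝓕 : Filtration ℝ m} {Xdot X : Ω → ℝ → ℝ}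
    (hXdot : Measurable (uncurry Xdot)) {C : ℝ} (hC : ∀ ω t, |Xdot ω t| ≤ C)
    (hX : ∀ ω t, X ω t = ∫ s in 0..t, Xdot ω s) (hXad : Adapted 𝓕 fun t ω => X ω t) :
    ∃ Z : Ω → ℝ → ℝ, Measurable (uncurry Z) ∧ (∀ t, StronglyMeasurable[𝓕 t] fun ω => Z ω t) ∧
      (∀ ω t, |Z ω t| ≤ C) ∧ ∀ ω, Z ω =ᵐ[volume] Xdot ω := by
  have hprimitive : ∀ ω, X ω = fun t => ∫ s in 0..t, Xdot ω s := fun ω => funext (hX ω)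
  have hXcont : ∀ ω, Continuous (X ω) := fun ω => by
    rw [hprimitive]
    exact intervalIntegral.continuous_primitive
      (intervalIntegrable_of_abs_le hXdot.of_uncurry_left (hC ω)) 0
  have hXm : Measurable (uncurry X) :=
    (measurable_uncurry_of_continuous_of_measurable hXcont
      fun t => (hXad t).mono (𝓕.le t) le_rfl).comp measurable_swap
  refine ⟨fun ω t => max (-C) (min C (limsupLeftSlope (X ω) t)),
    measurable_const.max (measurable_const.min hXm.limsupLeftSlope),
    fun t => (measurable_const.max (measurable_const.min (measurable_limsupLeftSlope_of_le
      fun s hs => (hXad s).mono (𝓕.mono hs) le_rfl))).stronglyMeasurable,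
    fun ω t => abs_le.2 ⟨le_max_left _ _, max_le ?_ (min_le_left _ _)⟩, fun ω => ?_⟩
  · linarith [(abs_nonneg _).trans (hC ω t)]
  have hloc : LocallyIntegrable (Xdot ω) volume :=
    (locallyIntegrable_const C).mono hXdot.of_uncurry_left.aestronglyMeasurable
      (ae_of_all _ fun t => (hC ω t).trans (le_abs_self C))
  filter_upwards [LocallyIntegrable.ae_hasDerivAt_integral hloc] with t ht
  rw [hprimitive, (ht 0).limsupLeftSlope_eq, min_eq_right (abs_le.1 (hC ω t)).2,
    max_eq_right (abs_le.1 (hC ω t)).1]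

end Modification

section Martingale

variable {Ω : Type*} {m : MeasurableSpace Ω} {μ : Measure Ω} [IsFiniteMeasure μ]

theorem MeasureTheory.Martingale.integral_mul_eq_of_le {ι : Type*} [Preorder ι] {𝓕 : Filtration ι m}
    {W : ι → Ω → ℝ} (hW : Martingale W 𝓕 μ) {s t : ι} (hst : s ≤ t) {g : Ω → ℝ}
    (hg : StronglyMeasurable[𝓕 s] g) {C : ℝ} (hgC : ∀ ω, |g ω| ≤ C) :
    ∫ ω, g ω * W t ω ∂μ = ∫ ω, g ω * W s ω ∂μ := by
  have hint : Integrable (g * W t) μ :=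
    (hW.integrable t).bdd_mul (hg.mono (𝓕.le s)).aestronglyMeasurable (ae_of_all _ hgC)
  calc ∫ ω, g ω * W t ω ∂μ = ∫ ω, (μ[g * W t | 𝓕 s]) ω ∂μ := (integral_condExp (𝓕.le s)).symm
    _ = ∫ ω, g ω * W s ω ∂μ := by
      refine integral_congr_ae
        ((condExp_mul_of_stronglyMeasurable_left hg hint (hW.integrable t)).trans ?_)
      filter_upwards [hW.condExp_ae_eq hst] with ω hω
      simp [hω]

theorem MeasureTheory.Martingale.integrable_prod_restrict_Ioc {𝓕 : Filtration ℝ m} {W : ℝ → Ω → ℝ}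
    (hW : Martingale W 𝓕 μ) (hWm : Measurable (uncurry W)) (a b : ℝ) :
    Integrable (fun p : Ω × ℝ => W p.2 p.1) (μ.prod (volume.restrict (Ioc a b))) := by
  have hWm' : Measurable fun p : Ω × ℝ => W p.2 p.1 := hWm.comp measurable_swap
  refine ⟨hWm'.aestronglyMeasurable, ?_⟩
  have hle : ∀ t ≤ b, ∫⁻ ω, ‖W t ω‖ₑ ∂μ ≤ ∫⁻ ω, ‖W b ω‖ₑ ∂μ := fun t ht => by
    have := eLpNorm_condExp_le_eLpNorm (m := 𝓕 t) (μ := μ) (W b) le_rfl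
    rwa [eLpNorm_congr_ae (hW.condExp_ae_eq ht), eLpNorm_one_eq_lintegral_enorm,
      eLpNorm_one_eq_lintegral_enorm] at this
  calc ∫⁻ p, ‖W p.2 p.1‖ₑ ∂(μ.prod (volume.restrict (Ioc a b)))
      = ∫⁻ t in Ioc a b, ∫⁻ ω, ‖W t ω‖ₑ ∂μ := lintegral_prod_symm' _ hWm'.enorm
    _ ≤ ∫⁻ _ in Ioc a b, ∫⁻ ω, ‖W b ω‖ₑ ∂μ :=
      setLIntegral_mono_ae' measurableSet_Ioc (ae_of_all _ fun t ht => hle t ht.2)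
    _ < ⊤ := by
      rw [setLIntegral_const]
      exact ENNReal.mul_lt_top (hW.integrable b).2 measure_Ioc_lt_top

theorem MeasureTheory.Martingale.integral_integral_mul_eq {𝓕 : Filtration ℝ m} {W : ℝ → Ω → ℝ}
    (hW : Martingale W 𝓕 μ) (hWm : Measurable (uncurry W)) {Z : Ω → ℝ → ℝ}
    (hZm : Measurable (uncurry Z)) (hZad : ∀ t, StronglyMeasurable[𝓕 t] fun ω => Z ω t)
    {C : ℝ} (hZC : ∀ ω t, |Z ω t| ≤ C) (a b : ℝ) :
    ∫ ω, (∫ t in Ioc a b, Z ω t) * W b ω ∂μ = ∫ ω, (∫ t in Ioc a b, Z ω t * W t ω) ∂μ := by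
  have hbound : ∀ᵐ p ∂(μ.prod (volume.restrict (Ioc a b))), ‖uncurry Z p‖ ≤ C :=
    ae_of_all _ fun p => hZC p.1 p.2
  calc ∫ ω, (∫ t in Ioc a b, Z ω t) * W b ω ∂μ
      = ∫ ω, (∫ t in Ioc a b, Z ω t * W b ω) ∂μ := by simp_rw [integral_mul_const]
    _ = ∫ t in Ioc a b, (∫ ω, Z ω t * W b ω ∂μ) :=
      integral_integral_swap (((hW.integrable b).comp_fst _).bdd_mul
        hZm.aestronglyMeasurable hbound)
    _ = ∫ t in Ioc a b, (∫ ω, Z ω t * W t ω ∂μ) :=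
      setIntegral_congr_fun measurableSet_Ioc fun t ht =>
        hW.integral_mul_eq_of_le ht.2 (hZad t) (hZC · t)
    _ = ∫ ω, (∫ t in Ioc a b, Z ω t * W t ω) ∂μ :=
      (integral_integral_swap ((hW.integrable_prod_restrict_Ioc hWm a b).bdd_mul
        hZm.aestronglyMeasurable hbound)).symm

theorem MeasureTheory.Martingale.integral_primitive_mul_eq {𝓕 : Filtration ℝ m}
    {W : ℝ → Ω → ℝ} (hW : Martingale W 𝓕 μ) (hWm : Measurable (uncurry W)) {Xdot X : Ω → ℝ → ℝ}
    (hXdot : Measurable (uncurry Xdot)) {C : ℝ} (hC : ∀ ω t, |Xdot ω t| ≤ C)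
    (hX : ∀ ω t, X ω t = ∫ s in 0..t, Xdot ω s) (hXad : Adapted 𝓕 fun t ω => X ω t)
    {T : ℝ} (hT : 0 ≤ T) :
    ∫ ω, X ω T * W T ω ∂μ = ∫ ω, (∫ t in 0..T, Xdot ω t * W t ω) ∂μ := by
  obtain ⟨Z, hZm, hZad, hZC, hZ⟩ := exists_adapted_modification_of_primitive hXdot hC hX hXad
  have hXZ : ∀ ω, X ω T = ∫ t in Ioc 0 T, Z ω t := fun ω => by
    rw [hX, intervalIntegral.integral_of_le hT,
      integral_congr_ae (ae_restrict_of_ae (hZ ω).symm)]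
  calc ∫ ω, X ω T * W T ω ∂μ = ∫ ω, (∫ t in Ioc 0 T, Z ω t) * W T ω ∂μ := by simp_rw [hXZ]
    _ = ∫ ω, (∫ t in Ioc 0 T, Z ω t * W t ω) ∂μ :=
      hW.integral_integral_mul_eq hWm hZm hZad hZC 0 T
    _ = ∫ ω, (∫ t in 0..T, Xdot ω t * W t ω) ∂μ := by
      refine integral_congr_ae (ae_of_all _ fun ω => ?_)
      dsimp only
      rw [intervalIntegral.integral_of_le hT]
      exact integral_congr_ae (ae_restrict_of_ae ((hZ ω).mono fun t ht => by simp only [ht]))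

end Martingale

section Integrability

variable {Ω : Type*} {m : MeasurableSpace Ω} {μ : Measure Ω} [IsFiniteMeasure μ]

lemma integrable_intervalIntegral_of_abs_le {F : Ω → ℝ → ℝ} (hF : Measurable (uncurry F))
    {C : ℝ} (hFC : ∀ ω t, |F ω t| ≤ C) (a b : ℝ) :
    Integrable (fun ω => ∫ t in a..b, F ω t) μ := by
  have hIoc : ∀ a b : ℝ, Integrable (fun ω => ∫ t in Ioc a b, F ω t) μ := fun a b =>
    (Integrable.of_bound (μ := μ.prod (volume.restrict (Ioc a b))) hF.aestronglyMeasurable C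
      (ae_of_all _ fun p => hFC p.1 p.2)).integral_prod_left
  exact (hIoc a b).sub (hIoc b a)

theorem MeasureTheory.Martingale.integrable_intervalIntegral_mul {𝓕 : Filtration ℝ m}
    {W : ℝ → Ω → ℝ} (hW : Martingale W 𝓕 μ) (hWm : Measurable (uncurry W))
    {F : Ω → ℝ → ℝ} (hF : Measurable (uncurry F)) {C : ℝ} (hFC : ∀ ω t, |F ω t| ≤ C)
    {T : ℝ} (hT : 0 ≤ T) :
    Integrable (fun ω => ∫ t in 0..T, F ω t * W t ω) μ :=
  ((hW.integrable_prod_restrict_Ioc hWm 0 T).bdd_mul hF.aestronglyMeasurable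
    (ae_of_all _ fun p => hFC p.1 p.2)).integral_prod_left.congr
    (ae_of_all _ fun _ => (intervalIntegral.integral_of_le hT).symm)

lemma integrable_exerciseGain {θ S : Ω → ℝ} (hθ : AEStronglyMeasurable θ μ) {Θ : ℝ}
    (hθΘ : ∀ ω, θ ω ∈ Icc 0 Θ) (hS : Integrable S μ) (lam K : ℝ) :
    Integrable (fun ω => θ ω * (S ω - 1 / 2 * lam * θ ω - K)) μ := by
  have hθC : ∀ᵐ ω ∂μ, ‖θ ω‖ ≤ Θ := ae_of_all _ fun ω => by
    rw [Real.norm_eq_abs, abs_of_nonneg (hθΘ ω).1]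
    exact (hθΘ ω).2
  exact ((hS.sub ((Integrable.of_bound hθ Θ hθC).const_mul _)).sub
    (integrable_const K)).bdd_mul hθ hθC

lemma MeasureTheory.Integrable.exerciseValue {S : Ω → ℝ} (hS : Integrable S μ) {lam Θ : ℝ}
    (hlam : 0 < lam) (hΘ : 0 ≤ Θ) (K : ℝ) : Integrable (fun ω => exerciseValue lam Θ K (S ω)) μ :=
  ((hS.sub (integrable_const K)).abs.const_mul Θ).mono'
    ((continuous_exerciseValue hlam hΘ).measurable.comp_aemeasurable
      hS.aemeasurable).aestronglyMeasurable
    (ae_of_all _ fun _ => abs_exerciseValue_le hlam hΘ)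

end Integrability

theorem integral_payoff_eq {Ω : Type*} {m : MeasurableSpace Ω} {μ : Measure Ω}
    [IsFiniteMeasure μ] {𝓕 : Filtration ℝ m} {W : ℝ → Ω → ℝ} (hW : Martingale W 𝓕 μ)
    (hWpath : ∀ ω, Continuous fun t => W t ω) {T : ℝ} (hT : 0 ≤ T) {Xdot X : Ω → ℝ → ℝ}
    (hXdot : Measurable (uncurry Xdot)) {C : ℝ} (hC : ∀ ω t, |Xdot ω t| ≤ C)
    (hX : ∀ ω t, X ω t = ∫ s in 0..t, Xdot ω s) (hXad : Adapted 𝓕 fun t ω => X ω t)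
    {θ : Ω → ℝ} (hθ : Measurable θ) {Θ : ℝ} (hθΘ : ∀ ω, θ ω ∈ Icc 0 Θ) (p₀ lam κ K : ℝ) :
    ∫ ω, (-(∫ t in 0..T, Xdot ω t * (p₀ + W t ω + lam * X ω t + κ * Xdot ω t))
        + (X ω T + θ ω) * (p₀ + W T ω + lam * X ω T - 1 / 2 * lam * (X ω T + θ ω))
        - θ ω * K) ∂μ
      = -κ * (∫ ω, (∫ t in 0..T, Xdot ω t ^ 2) ∂μ)
        + ∫ ω, θ ω * (p₀ + W T ω - 1 / 2 * lam * θ ω - K) ∂μ := by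
  have hWm : Measurable (uncurry W) := measurable_uncurry_of_continuous_of_measurable hWpath
    fun t => ((hW.stronglyAdapted t).mono (𝓕.le t)).measurable
  have hXdot2 : ∀ ω t, |Xdot ω t ^ 2| ≤ C ^ 2 := fun ω t => by
    rw [abs_pow]
    exact pow_le_pow_left₀ (abs_nonneg _) (hC ω t) 2
  have hQ : Integrable (fun ω => ∫ t in 0..T, Xdot ω t ^ 2) μ :=
    integrable_intervalIntegral_of_abs_le (hXdot.pow_const 2) hXdot2 0 T
  have hS : Integrable (fun ω => p₀ + W T ω) μ := (integrable_const p₀).add (hW.integrable T)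
  have hG := integrable_exerciseGain hθ.aestronglyMeasurable hθΘ hS lam K
  have hXW : Integrable (fun ω => X ω T * W T ω) μ := by
    refine (hW.integrable T).bdd_mul (c := C * |T - 0|)
      ((hXad T).mono (𝓕.le T) le_rfl).aestronglyMeasurable (ae_of_all _ fun ω => ?_)
    rw [hX]
    exact intervalIntegral.norm_integral_le_of_norm_le_const fun t _ => hC ω t
  have hR := hW.integrable_intervalIntegral_mul hWm hXdot hC hT
  have hmart : ∫ ω, (X ω T * W T ω - ∫ t in 0..T, Xdot ω t * W t ω) ∂μ = 0 := by
    rw [integral_sub hXW hR, hW.integral_primitive_mul_eq hWm hXdot hC hX hXad hT, sub_self]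
  rw [integral_congr_ae (ae_of_all _ fun ω => payoff_decomposition
      (intervalIntegrable_of_abs_le hXdot.of_uncurry_left (hC ω) 0 T)
      (intervalIntegrable_of_abs_le (hXdot.of_uncurry_left.pow_const 2) (hXdot2 ω) 0 T)
      (hWpath ω) (hX ω) p₀ lam κ (θ ω) K),
    integral_add ((hQ.const_mul _).fun_add hG) (hXW.sub' hR), integral_add (hQ.const_mul _) hG,
    integral_const_mul, hmart, add_zero]

theorem stmt_19_general {Ω : Type*} {m : MeasurableSpace Ω} (μ : Measure Ω)
    [IsProbabilityMeasure μ]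
    (𝓕 : Filtration ℝ m) (W : ℝ → Ω → ℝ)
    (hW : Martingale W 𝓕 μ)
    (hWpath : ∀ ω, Continuous fun t => W t ω)
    (T lam κ Θ : ℝ) (hT : 0 < T) (hlam : 0 < lam) (hκ : 0 < κ) (hΘ : 0 < Θ)
    (p₀ K : ℝ)
    (Xdot : Ω → ℝ → ℝ) (hXdotmeas : Measurable (Function.uncurry Xdot))
    (Cb : ℝ) (hXdotb : ∀ ω t, |Xdot ω t| ≤ Cb)
    (X : Ω → ℝ → ℝ) (hXac : ∀ ω t, X ω t = ∫ s in (0 : ℝ)..t, Xdot ω s)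
    (hXadapted : Adapted 𝓕 fun t ω => X ω t)
    (θ : Ω → ℝ) (hθmeas : Measurable[𝓕 T] θ)
    (hθrange : ∀ ω, θ ω ∈ Set.Icc (0 : ℝ) Θ)
    (P : Ω → ℝ → ℝ) (hP : ∀ ω t, P ω t = p₀ + W t ω + lam * X ω t)
    (J : Ω → ℝ)
    (hJ : ∀ ω, J ω = -(∫ t in (0 : ℝ)..T, Xdot ω t * (P ω t + κ * Xdot ω t))
      + (X ω T + θ ω) * (P ω T - (1 / 2) * lam * (X ω T + θ ω)) - θ ω * K) :
    (∫ ω, J ω ∂μ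
        = -κ * (∫ ω, (∫ t in (0 : ℝ)..T, (Xdot ω t) ^ 2) ∂μ)
          + ∫ ω, θ ω * (p₀ + W T ω - (1 / 2) * lam * θ ω - K) ∂μ) ∧
    (∫ ω, J ω ∂μ
        ≤ ∫ ω, sSup ((fun ϑ => ϑ * (p₀ + W T ω - (1 / 2) * lam * ϑ - K)) ''
            Set.Icc (0 : ℝ) Θ) ∂μ) ∧
    (∀ θ' J' : Ω → ℝ,
      Measurable[𝓕 T] θ' → (∀ ω, θ' ω ∈ Set.Icc (0 : ℝ) Θ) →
      (∀ ω, θ' ω * (p₀ + W T ω - (1 / 2) * lam * θ' ω - K)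
        = sSup ((fun ϑ => ϑ * (p₀ + W T ω - (1 / 2) * lam * ϑ - K)) ''
            Set.Icc (0 : ℝ) Θ)) →
      (∀ ω, J' ω = θ' ω * ((p₀ + W T ω) - (1 / 2) * lam * θ' ω) - θ' ω * K) →
      ∫ ω, J' ω ∂μ
        = ∫ ω, sSup ((fun ϑ => ϑ * (p₀ + W T ω - (1 / 2) * lam * ϑ - K)) ''
            Set.Icc (0 : ℝ) Θ) ∂μ) := by
  have hvalue : ∫ ω, J ω ∂μ = -κ * (∫ ω, (∫ t in 0..T, Xdot ω t ^ 2) ∂μ)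
      + ∫ ω, θ ω * (p₀ + W T ω - 1 / 2 * lam * θ ω - K) ∂μ := by
    simp only [hJ, hP]
    exact integral_payoff_eq hW hWpath hT.le hXdotmeas hXdotb hXac hXadapted
      (hθmeas.mono (𝓕.le T) le_rfl) hθrange p₀ lam κ K
  refine ⟨hvalue, ?_, fun θ' J' _ _ hmax hJ' => integral_congr_ae (ae_of_all _ fun ω => ?_)⟩
  · have hS : Integrable (fun ω => p₀ + W T ω) μ := (integrable_const p₀).add (hW.integrable T)
    have hQ : 0 ≤ ∫ ω, (∫ t in 0..T, Xdot ω t ^ 2) ∂μ := integral_nonneg fun ω =>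
      intervalIntegral.integral_nonneg hT.le fun t _ => sq_nonneg _
    have hle := integral_mono
      (integrable_exerciseGain (hθmeas.mono (𝓕.le T) le_rfl).aestronglyMeasurable hθrange hS
        lam K)
      (hS.exerciseValue hlam hΘ.le K) fun ω => le_exerciseValue hlam (hθrange ω)
    change _ ≤ ∫ ω, exerciseValue lam Θ K (p₀ + W T ω) ∂μ
    nlinarith
  · simp only [hJ' ω, ← hmax ω]
    ring

/-- Call options with physical delivery induce no stock price manipulation:
with `P_t = p₀ + W_t + λX_t` and payoff
`J = −∫₀ᵀ Ẋ(P + κẊ) dt + (X_T + θ)(P_T − ½λ(X_T + θ)) − θK`, one has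
`𝔼[J] = −κ𝔼[∫₀ᵀ Ẋ² dt] + 𝔼[θ(p₀ + W_T − ½λθ − K)]`, hence
`𝔼[J] ≤ 𝔼[sup_{ϑ ∈ [0,Θ]} ϑ(p₀ + W_T − ½λϑ − K)]`, with equality attained by
the zero trading strategy together with a pointwise maximizer `θ'`. -/
theorem stmt_19 {Ω : Type*} {m : MeasurableSpace Ω} (μ : Measure Ω)
    [IsProbabilityMeasure μ]
    (𝓕 : Filtration ℝ m) (W : ℝ → Ω → ℝ)
    (hW : Martingale W 𝓕 μ) (hW2 : ∀ t : ℝ, MemLp (W t) 2 μ)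
    (hW0 : ∀ ω, W 0 ω = 0) (hWpath : ∀ ω, Continuous fun t => W t ω)
    (T lam κ Θ : ℝ) (hT : 0 < T) (hlam : 0 < lam) (hκ : 0 < κ) (hΘ : 0 < Θ)
    (p₀ K : ℝ)
    (Xdot : Ω → ℝ → ℝ) (hXdotmeas : Measurable (Function.uncurry Xdot))
    (Cb : ℝ) (hXdotb : ∀ ω t, |Xdot ω t| ≤ Cb)
    (X : Ω → ℝ → ℝ) (hXac : ∀ ω t, X ω t = ∫ s in (0 : ℝ)..t, Xdot ω s)
    (hXadapted : Adapted 𝓕 fun t ω => X ω t)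
    (θ : Ω → ℝ) (hθmeas : Measurable[𝓕 T] θ)
    (hθrange : ∀ ω, θ ω ∈ Set.Icc (0 : ℝ) Θ)
    (P : Ω → ℝ → ℝ) (hP : ∀ ω t, P ω t = p₀ + W t ω + lam * X ω t)
    (J : Ω → ℝ)
    (hJ : ∀ ω, J ω = -(∫ t in (0 : ℝ)..T, Xdot ω t * (P ω t + κ * Xdot ω t))
      + (X ω T + θ ω) * (P ω T - (1 / 2) * lam * (X ω T + θ ω)) - θ ω * K) :
    (∫ ω, J ω ∂μ
        = -κ * (∫ ω, (∫ t in (0 : ℝ)..T, (Xdot ω t) ^ 2) ∂μ)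
          + ∫ ω, θ ω * (p₀ + W T ω - (1 / 2) * lam * θ ω - K) ∂μ) ∧
    (∫ ω, J ω ∂μ
        ≤ ∫ ω, sSup ((fun ϑ => ϑ * (p₀ + W T ω - (1 / 2) * lam * ϑ - K)) ''
            Set.Icc (0 : ℝ) Θ) ∂μ) ∧
    (∀ θ' J' : Ω → ℝ,
      Measurable[𝓕 T] θ' → (∀ ω, θ' ω ∈ Set.Icc (0 : ℝ) Θ) →
      (∀ ω, θ' ω * (p₀ + W T ω - (1 / 2) * lam * θ' ω - K)
        = sSup ((fun ϑ => ϑ * (p₀ + W T ω - (1 / 2) * lam * ϑ - K)) ''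
            Set.Icc (0 : ℝ) Θ)) →
      (∀ ω, J' ω = θ' ω * ((p₀ + W T ω) - (1 / 2) * lam * θ' ω) - θ' ω * K) →
      ∫ ω, J' ω ∂μ
        = ∫ ω, sSup ((fun ϑ => ϑ * (p₀ + W T ω - (1 / 2) * lam * ϑ - K)) ''
            Set.Icc (0 : ℝ) Θ) ∂μ) :=
  stmt_19_general μ 𝓕 W hW hWpath T lam κ Θ hT hlam hκ hΘ p₀ K Xdot hXdotmeas Cb hXdotb X hXac
    hXadapted θ hθmeas hθrange P hP J hJ
end
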